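/- arXiv:math/0411224 — 7 statements merged into one kernel-verified Lean document; each statement's English description precedes it below -/
import Mathlib

section
/- Hamiltonian flows preserve the symplectic form: for every t ∈ ℝ, every x ∈ E and all ξ, η ∈ E one has ω(Dφ_t(x)(ξ), Dφ_t(x)(η)) = ω(ξ, η), where Dφ_t(x) denotes the differential at x of the map y ↦ φ(t, y). -/
/-- Hamiltonian flows preserve the symplectic form: for every `t ∈ ℝ`,
every `x ∈ E` and all `ξ, η ∈ E` one has `ω(Dφ_t(x) ξ, Dφ_t(x) η) = ω(ξ, η)`. -/
theorem hamiltonian_flow_preserves_symplectic_form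
    {E : Type*} [NormedAddCommGroup E] [NormedSpace ℝ E] [FiniteDimensional ℝ E]
    (ω : E →ₗ[ℝ] E →ₗ[ℝ] ℝ)
    (hskew : ∀ ξ η : E, ω ξ η = - ω η ξ)
    (hnondeg : ∀ ξ : E, (∀ η : E, ω ξ η = 0) → ξ = 0)
    (h : E → ℝ) (hh : ContDiff ℝ (⊤ : ℕ∞) h)
    (Xh : E → E) (hXh : ContDiff ℝ (⊤ : ℕ∞) Xh)
    (hham : ∀ x w : E, fderiv ℝ h x w = ω w (Xh x))
    (φ : ℝ → E → E) (hφ : ContDiff ℝ (⊤ : ℕ∞) (fun p : ℝ × E => φ p.1 p.2))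
    (hφ0 : ∀ x : E, φ 0 x = x)
    (hφt : ∀ (t : ℝ) (x : E), HasDerivAt (fun s : ℝ => φ s x) (Xh (φ t x)) t) :
    ∀ (t : ℝ) (x ξ η : E),
      ω (fderiv ℝ (fun y => φ t y) x ξ) (fderiv ℝ (fun y => φ t y) x η) = ω ξ η := by
  classical
  set F : ℝ × E → E := fun p => φ p.1 p.2 with hF
  have hFd : Differentiable ℝ F := hφ.differentiable (by simp)
  have hXhd : Differentiable ℝ Xh := hXh.differentiable (by simp)
  have hF1 : ContDiff ℝ (⊤ : ℕ∞) (fderiv ℝ F) := hφ.fderiv_right (by simp)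
  have hF1d : Differentiable ℝ (fderiv ℝ F) := hF1.differentiable (by simp)
  -- `ω` as a continuous bilinear map
  let ωl : E →ₗ[ℝ] (E →L[ℝ] ℝ) :=
    { toFun := fun a => (ω a).toContinuousLinearMap
      map_add' := fun a b => by ext c; simp
      map_smul' := fun c a => by ext b; simp }
  let ωc : E →L[ℝ] E →L[ℝ] ℝ := ωl.toContinuousLinearMap
  have hωc : ∀ a b : E, ωc a b = ω a b := fun a b => by simp [ωc, ωl]
  -- spatial partial derivative
  have hpartx : ∀ (t : ℝ) (x v : E),
      fderiv ℝ (fun y => φ t y) x v = fderiv ℝ F (t, x) (0, v) := by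
    intro t x v
    have hc : HasFDerivAt (fun y => φ t y)
        ((fderiv ℝ F (t, x)).comp (ContinuousLinearMap.inr ℝ ℝ E)) x :=
      ((hFd (t, x)).hasFDerivAt).comp x (hasFDerivAt_prodMk_right t x)
    rw [hc.fderiv]; rfl
  -- time partial derivative
  have hpartt : ∀ p : ℝ × E, fderiv ℝ F p (1, 0) = Xh (F p) := by
    intro p
    obtain ⟨s, y⟩ := p
    have h1 : HasFDerivAt (fun r : ℝ => F (r, y))
        ((fderiv ℝ F (s, y)).comp (ContinuousLinearMap.inl ℝ ℝ E)) s :=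
      by have h0 := hasFDerivAt_prodMk_left (𝕜 := ℝ) s y; exact ((hFd (s, y)).hasFDerivAt).comp s h0
    have h2 : HasDerivAt (fun r : ℝ => F (r, y)) (Xh (φ s y)) s := hφt s y
    have := h1.unique h2.hasFDerivAt
    have := congrArg (fun L : ℝ →L[ℝ] E => L 1) this
    simpa using this
  -- mixed second derivative: time evolution of the spatial differential
  have hmix : ∀ (t : ℝ) (x v : E),
      HasDerivAt (fun s : ℝ => fderiv ℝ F (s, x) (0, v))
        (fderiv ℝ Xh (F (t, x)) (fderiv ℝ F (t, x) (0, v))) t := by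
    intro t x v
    have hcurve : HasDerivAt (fun s : ℝ => ((s, x) : ℝ × E)) ((1 : ℝ), (0 : E)) t := by
      simpa using ((hasDerivAt_id t).prodMk (hasDerivAt_const t x))
    have happly : HasFDerivAt (fun p : ℝ × E => fderiv ℝ F p (0, v))
        ((fderiv ℝ (fderiv ℝ F) (t, x)).flip (0, v)) (t, x) := by
      have := ((hF1d (t, x)).hasFDerivAt).clm_apply (hasFDerivAt_const ((0 : ℝ), v) (t, x))
      simpa using this
    have hmain : HasDerivAt (fun s : ℝ => fderiv ℝ F (s, x) (0, v))
        (fderiv ℝ (fderiv ℝ F) (t, x) (1, 0) (0, v)) t := by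
      simpa [Function.comp_def] using happly.comp_hasDerivAt t hcurve
    have hsymm : IsSymmSndFDerivAt ℝ F (t, x) :=
      hφ.contDiffAt.isSymmSndFDerivAt (by simp only [minSmoothness_of_isRCLikeNormedField]; exact WithTop.coe_le_coe.mpr le_top)
    rw [hsymm (1, 0) (0, v)] at hmain
    have key : fderiv ℝ (fderiv ℝ F) (t, x) (0, v) (1, 0)
        = fderiv ℝ Xh (F (t, x)) (fderiv ℝ F (t, x) (0, v)) := by
      have e1 : HasFDerivAt (fun p : ℝ × E => fderiv ℝ F p (1, 0))
          ((fderiv ℝ (fderiv ℝ F) (t, x)).flip (1, 0)) (t, x) := by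
        have := ((hF1d (t, x)).hasFDerivAt).clm_apply
          (hasFDerivAt_const ((1 : ℝ), (0 : E)) (t, x))
        simpa using this
      have e2 : HasFDerivAt (fun p : ℝ × E => Xh (F p))
          ((fderiv ℝ Xh (F (t, x))).comp (fderiv ℝ F (t, x))) (t, x) :=
        ((hXhd (F (t, x))).hasFDerivAt).comp (t, x) ((hFd (t, x)).hasFDerivAt)
      have efun : (fun p : ℝ × E => fderiv ℝ F p (1, 0)) = fun p : ℝ × E => Xh (F p) :=
        funext hpartt
      rw [efun] at e1
      have := e1.unique e2
      have := congrArg (fun L : ℝ × E →L[ℝ] E => L (0, v)) this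
      simpa using this
    rw [key] at hmain
    exact hmain
  -- symmetry relation coming from the second derivative of `h`
  have hDX : ∀ y v w : E, ω w (fderiv ℝ Xh y v) = ω v (fderiv ℝ Xh y w) := by
    have hh1 : ContDiff ℝ (⊤ : ℕ∞) (fderiv ℝ h) := hh.fderiv_right (by simp)
    have hh1d : Differentiable ℝ (fderiv ℝ h) := hh1.differentiable (by simp)
    have key : ∀ y v w : E, fderiv ℝ (fderiv ℝ h) y v w = ω w (fderiv ℝ Xh y v) := by
      intro y v w
      have e1 : HasFDerivAt (fun x => fderiv ℝ h x w)
          ((fderiv ℝ (fderiv ℝ h) y).flip w) y := by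
        have := ((hh1d y).hasFDerivAt).clm_apply (hasFDerivAt_const w y)
        simpa using this
      have e2 : HasFDerivAt (fun x => (ω w).toContinuousLinearMap (Xh x))
          (((ω w).toContinuousLinearMap).comp (fderiv ℝ Xh y)) y :=
        (ω w).toContinuousLinearMap.hasFDerivAt.comp y (hXhd y).hasFDerivAt
      have efun : (fun x => fderiv ℝ h x w) = fun x => (ω w).toContinuousLinearMap (Xh x) := by
        funext x; simpa using hham x w
      rw [efun] at e1
      have := e1.unique e2
      have := congrArg (fun L : E →L[ℝ] ℝ => L v) this
      simpa using this
    intro y v w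
    have hsymm : IsSymmSndFDerivAt ℝ h y :=
      hh.contDiffAt.isSymmSndFDerivAt (by simp only [minSmoothness_of_isRCLikeNormedField]; exact WithTop.coe_le_coe.mpr le_top)
    rw [← key y v w, ← key y w v, hsymm v w]
  -- the main argument
  intro t x ξ η
  set g : ℝ → ℝ := fun s => ωc (fderiv ℝ F (s, x) (0, ξ)) (fderiv ℝ F (s, x) (0, η)) with hg
  have hg' : ∀ s : ℝ, HasDerivAt g 0 s := by
    intro s
    set a : E := fderiv ℝ F (s, x) (0, ξ)
    set b : E := fderiv ℝ F (s, x) (0, η)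
    set y : E := F (s, x)
    have ha : HasDerivAt (fun r : ℝ => fderiv ℝ F (r, x) (0, ξ)) (fderiv ℝ Xh y a) s :=
      hmix s x ξ
    have hb : HasDerivAt (fun r : ℝ => fderiv ℝ F (r, x) (0, η)) (fderiv ℝ Xh y b) s :=
      hmix s x η
    have hc : HasDerivAt (fun r : ℝ => ωc (fderiv ℝ F (r, x) (0, ξ)))
        (ωc (fderiv ℝ Xh y a)) s := ωc.hasFDerivAt.comp_hasDerivAt s ha
    have := hc.clm_apply hb
    have hz : ωc (fderiv ℝ Xh y a) b + ωc a (fderiv ℝ Xh y b) = 0 := by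
      rw [hωc, hωc, hskew (fderiv ℝ Xh y a) b, hDX y a b]
      ring
    rw [hz] at this
    exact this
  have hconst : g t = g 0 :=
    is_const_of_deriv_eq_zero (fun s => (hg' s).differentiableAt)
      (fun s => (hg' s).deriv) t 0
  have hg0 : g 0 = ω ξ η := by
    have hid : (fun y => φ 0 y) = (id : E → E) := funext hφ0
    have h0ξ : fderiv ℝ F (0, x) (0, ξ) = ξ := by
      rw [← hpartx 0 x ξ, hid, fderiv_id]; rfl
    have h0η : fderiv ℝ F (0, x) (0, η) = η := by
      rw [← hpartx 0 x η, hid, fderiv_id]; rfl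
    rw [hg]; simp only [h0ξ, h0η, hωc]
  calc ω (fderiv ℝ (fun y => φ t y) x ξ) (fderiv ℝ (fun y => φ t y) x η)
      = g t := by simp only [hg, hωc, hpartx t x ξ, hpartx t x η]
    _ = g 0 := hconst
    _ = ω ξ η := hg0
end

section
/- For smooth vector fields v₁, v₂ : E → E and x ∈ E, the function t ↦ ω(((φ_t)_* v₁)(x), ((φ_t)_* v₂)(x)), where the pushforward is ((φ_t)_* v)(x) = Dφ_t(φ(−t, x))(v(φ(−t, x))), is differentiable at t = 0 and its derivative there equals −(ω([X_h, v₁](x), v₂(x)) + ω(v₁(x), [X_h, v₂](x))). -/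
/-- The Lie bracket `[V, W](x) = DW(x)(V(x)) − DV(x)(W(x))` of two vector fields on a
normed space. -/
noncomputable def lieBracket {E : Type*} [NormedAddCommGroup E] [NormedSpace ℝ E]
    (V W : E → E) (x : E) : E :=
  fderiv ℝ W x (V x) - fderiv ℝ V x (W x)

/-- For smooth vector fields `v₁, v₂ : E → E` and `x ∈ E`, the function
`t ↦ ω(((φ_t)_* v₁)(x), ((φ_t)_* v₂)(x))`, where
`((φ_t)_* v)(x) = Dφ_t(φ(−t, x))(v(φ(−t, x)))`, is differentiable at `t = 0` with
derivative `−(ω([X_h, v₁](x), v₂(x)) + ω(v₁(x), [X_h, v₂](x)))`. -/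
theorem deriv_of_pushforward_pairing_at_zero
    {E : Type*} [NormedAddCommGroup E] [NormedSpace ℝ E] [FiniteDimensional ℝ E]
    (ω : E →ₗ[ℝ] E →ₗ[ℝ] ℝ)
    (hskew : ∀ ξ η : E, ω ξ η = - ω η ξ)
    (hnondeg : ∀ ξ : E, (∀ η : E, ω ξ η = 0) → ξ = 0)
    (h : E → ℝ) (hh : ContDiff ℝ (⊤ : ℕ∞) h)
    (Xh : E → E) (hXh : ContDiff ℝ (⊤ : ℕ∞) Xh)
    (hham : ∀ x w : E, fderiv ℝ h x w = ω w (Xh x))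
    (φ : ℝ → E → E) (hφ : ContDiff ℝ (⊤ : ℕ∞) (fun p : ℝ × E => φ p.1 p.2))
    (hφ0 : ∀ x : E, φ 0 x = x)
    (hφt : ∀ (t : ℝ) (x : E), HasDerivAt (fun s : ℝ => φ s x) (Xh (φ t x)) t)
    (v₁ v₂ : E → E) (hv₁ : ContDiff ℝ (⊤ : ℕ∞) v₁) (hv₂ : ContDiff ℝ (⊤ : ℕ∞) v₂)
    (x : E) :
    HasDerivAt
      (fun t : ℝ =>
        ω (fderiv ℝ (fun y => φ t y) (φ (-t) x) (v₁ (φ (-t) x)))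
          (fderiv ℝ (fun y => φ t y) (φ (-t) x) (v₂ (φ (-t) x))))
      (-(ω (lieBracket Xh v₁ x) (v₂ x) + ω (v₁ x) (lieBracket Xh v₂ x))) 0 := by
  classical
  set Φ : ℝ × E → E := fun p => φ p.1 p.2 with hΦdef
  have hΦ : ContDiff ℝ (⊤ : ℕ∞) Φ := hφ
  have hΦd : Differentiable ℝ Φ := hΦ.differentiable (by simp)
  set G : ℝ × E → (ℝ × E) →L[ℝ] E := fderiv ℝ Φ with hGdef
  have hG : ContDiff ℝ (⊤ : ℕ∞) G := hΦ.fderiv_right (by simp)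
  have hΦfd : ∀ p, HasFDerivAt Φ (G p) p := fun p => (hΦd p).hasFDerivAt
  -- partial derivative in the time direction
  have hpt : ∀ p : ℝ × E, G p (1, 0) = Xh (Φ p) := by
    intro p
    have hmk : HasDerivAt (fun s : ℝ => ((s, p.2) : ℝ × E)) (1, 0) p.1 :=
      (hasDerivAt_id p.1).prodMk (hasDerivAt_const p.1 p.2)
    have h1 : HasDerivAt (fun s : ℝ => Φ (s, p.2)) (G p (1, 0)) p.1 := by
      have := (hΦfd p).comp_hasDerivAt p.1 (by simpa using hmk)
      simpa [Function.comp_def] using this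
    exact h1.unique (hφt p.1 p.2)
  -- partial derivative in the space direction
  have hpy : ∀ (t : ℝ) (y : E), fderiv ℝ (fun z => φ t z) y
      = (G (t, y)).comp (ContinuousLinearMap.inr ℝ ℝ E) := by
    intro t y
    have hmk : HasFDerivAt (fun z : E => ((t, z) : ℝ × E))
        (ContinuousLinearMap.inr ℝ ℝ E) y := hasFDerivAt_prodMk_right t y
    exact ((hΦfd (t, y)).comp y hmk).fderiv
  -- since `φ 0 = id`
  have hid : ∀ (y w : E), G (0, y) (0, w) = w := by
    intro y w
    have h0 : (fun z : E => φ 0 z) = id := funext hφ0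
    have h1 := hpy 0 y
    rw [h0, fderiv_id] at h1
    have := congrArg (fun L : E →L[ℝ] E => L w) h1.symm
    simpa using this
  -- second derivative
  have hGd : Differentiable ℝ G := hG.differentiable (by simp)
  set B : (ℝ × E) →L[ℝ] (ℝ × E) →L[ℝ] E := fderiv ℝ G (0, x) with hBdef
  have hB : HasFDerivAt G B (0, x) := (hGd (0, x)).hasFDerivAt
  have hsymm : ∀ q r : ℝ × E, B q r = B r q :=
    fun q r => second_derivative_symmetric hΦfd hB q r
  have hx0 : Φ (0, x) = x := hφ0 x
  -- pure space second derivative at time 0 vanishes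
  have hB1 : ∀ a w : E, B (0, a) (0, w) = 0 := by
    intro a w
    have hmk : HasFDerivAt (fun z : E => ((0 : ℝ), z))
        (ContinuousLinearMap.inr ℝ ℝ E) x := hasFDerivAt_prodMk_right 0 x
    have h1 : HasFDerivAt (fun z : E => G (0, z) ((0 : ℝ), w))
        ((G (0, x)).comp (0 : E →L[ℝ] ℝ × E)
          + (B.comp (ContinuousLinearMap.inr ℝ ℝ E)).flip ((0 : ℝ), w)) x :=
      (hB.comp x hmk).clm_apply (hasFDerivAt_const ((0 : ℝ), w) x)
    have h2 : HasFDerivAt (fun z : E => G (0, z) ((0 : ℝ), w)) (0 : E →L[ℝ] E) x := by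
      have heq : (fun z : E => G (0, z) ((0 : ℝ), w)) = fun _ => w :=
        funext fun z => hid z w
      rw [heq]; exact hasFDerivAt_const w x
    have h3 := h1.unique h2
    have := congrArg (fun L : E →L[ℝ] E => L a) h3
    simpa using this
  -- mixed second derivative
  have hB2 : ∀ q : ℝ × E, B q ((1 : ℝ), (0 : E)) = fderiv ℝ Xh x (G (0, x) q) := by
    intro q
    have h1 : HasFDerivAt (fun p : ℝ × E => G p ((1 : ℝ), (0 : E)))
        ((G (0, x)).comp (0 : (ℝ × E) →L[ℝ] ℝ × E) + B.flip ((1 : ℝ), (0 : E))) (0, x) :=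
      hB.clm_apply (hasFDerivAt_const ((1 : ℝ), (0 : E)) (0, x))
    have h2 : HasFDerivAt (fun p : ℝ × E => Xh (Φ p))
        ((fderiv ℝ Xh x).comp (G (0, x))) (0, x) := by
      have hX : HasFDerivAt Xh (fderiv ℝ Xh x) (Φ (0, x)) := by
        rw [hx0]; exact (hXh.differentiable (by simp) x).hasFDerivAt
      exact hX.comp (0, x) (hΦfd (0, x))
    have heq : (fun p : ℝ × E => G p ((1 : ℝ), (0 : E))) = fun p => Xh (Φ p) :=
      funext hpt
    rw [heq] at h1
    have h3 := h1.unique h2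
    have := congrArg (fun L : (ℝ × E) →L[ℝ] E => L q) h3
    simpa using this
  have hB3 : ∀ w : E, B ((1 : ℝ), -Xh x) ((0 : ℝ), w) = fderiv ℝ Xh x w := by
    intro w
    have hsplit : ((1 : ℝ), -Xh x) = ((1 : ℝ), (0 : E)) + ((0 : ℝ), -Xh x) := by simp
    rw [hsplit, map_add, ContinuousLinearMap.add_apply, hB1, add_zero,
      hsymm ((1 : ℝ), (0 : E)) ((0 : ℝ), w), hB2, hid]
  -- the curve t ↦ φ (-t) x
  have hc : HasDerivAt (fun t : ℝ => φ (-t) x) (-Xh x) 0 := by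
    have h1 : HasDerivAt (fun s : ℝ => φ s x) (Xh (φ 0 x)) (-(0 : ℝ)) := by
      rw [neg_zero]; exact hφt 0 x
    have h2 : HasDerivAt (fun t : ℝ => -t) (-1 : ℝ) 0 := (hasDerivAt_id 0).neg
    have := h1.scomp 0 h2
    simpa [hφ0 x, Function.comp_def] using this
  have hγ : HasDerivAt (fun t : ℝ => ((t, φ (-t) x) : ℝ × E)) (1, -Xh x) 0 :=
    (hasDerivAt_id 0).prodMk hc
  have hγ0 : ((0 : ℝ), φ (-(0 : ℝ)) x) = ((0 : ℝ), x) := by simp [hφ0 x]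
  have hA : HasDerivAt (fun t : ℝ => G (t, φ (-t) x)) (B (1, -Xh x)) 0 := by
    have hB' : HasFDerivAt G B ((fun t : ℝ => ((t, φ (-t) x) : ℝ × E)) 0) := by
      simpa [hφ0 x] using hB
    exact hB'.comp_hasDerivAt 0 hγ
  have hx' : φ (-(0 : ℝ)) x = x := by simp [hφ0 x]
  -- derivatives of v i along the curve
  have hu : ∀ (v : E → E), ContDiff ℝ (⊤ : ℕ∞) v →
      HasDerivAt (fun t : ℝ => v (φ (-t) x)) (fderiv ℝ v x (-Xh x)) 0 := by
    intro v hv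
    have hvd : HasFDerivAt v (fderiv ℝ v x) ((fun t : ℝ => φ (-t) x) 0) := by
      simpa [hφ0 x] using (hv.differentiable (by simp) x).hasFDerivAt
    exact hvd.comp_hasDerivAt 0 hc
  -- the moving vectors
  have hg : ∀ (v : E → E), ContDiff ℝ (⊤ : ℕ∞) v →
      HasDerivAt (fun t : ℝ => G (t, φ (-t) x) ((0 : ℝ), v (φ (-t) x)))
        (-(lieBracket Xh v x)) 0 := by
    intro v hv
    have hw : HasDerivAt (fun t : ℝ => (((0 : ℝ), v (φ (-t) x)) : ℝ × E))
        ((0 : ℝ), fderiv ℝ v x (-Xh x)) 0 :=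
      (hasDerivAt_const 0 (0 : ℝ)).prodMk (hu v hv)
    have := hA.clm_apply hw
    have hval : B (1, -Xh x) (((0 : ℝ), v (φ (-(0 : ℝ)) x)) : ℝ × E)
        + G ((0 : ℝ), φ (-(0 : ℝ)) x) ((0 : ℝ), fderiv ℝ v x (-Xh x))
        = -(lieBracket Xh v x) := by
      rw [hx', hB3, hid, lieBracket]
      simp [map_neg]
      abel
    rw [hval] at this
    exact this
  have hg₁' := hg v₁ hv₁
  have hg₂' := hg v₂ hv₂
  -- continuous bilinear version of ω
  let ωc : E →ₗ[ℝ] E →L[ℝ] ℝ :=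
    { toFun := fun ξ => LinearMap.toContinuousLinearMap (ω ξ)
      map_add' := by intro a b; ext w; simp
      map_smul' := by intro c a; ext w; simp }
  let Ω : E →L[ℝ] E →L[ℝ] ℝ := LinearMap.toContinuousLinearMap ωc
  have hΩ : ∀ ξ η : E, Ω ξ η = ω ξ η := fun ξ η => rfl
  -- assemble
  have hΩ₁ : HasDerivAt (fun t : ℝ => Ω (G (t, φ (-t) x) ((0 : ℝ), v₁ (φ (-t) x))))
      (Ω (-(lieBracket Xh v₁ x))) 0 :=
    (Ω.hasFDerivAt).comp_hasDerivAt 0 hg₁'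
  have hmain := hΩ₁.clm_apply hg₂'
  have hval₁ : G ((0 : ℝ), φ (-(0 : ℝ)) x) ((0 : ℝ), v₁ (φ (-(0 : ℝ)) x)) = v₁ x := by
    rw [hx', hid]
  have hval₂ : G ((0 : ℝ), φ (-(0 : ℝ)) x) ((0 : ℝ), v₂ (φ (-(0 : ℝ)) x)) = v₂ x := by
    rw [hx', hid]
  have heqfun : (fun t : ℝ =>
        Ω (G (t, φ (-t) x) ((0 : ℝ), v₁ (φ (-t) x)))
          (G (t, φ (-t) x) ((0 : ℝ), v₂ (φ (-t) x))))
      = (fun t : ℝ =>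
        ω (fderiv ℝ (fun y => φ t y) (φ (-t) x) (v₁ (φ (-t) x)))
          (fderiv ℝ (fun y => φ t y) (φ (-t) x) (v₂ (φ (-t) x)))) := by
    funext t
    rw [hpy t (φ (-t) x)]
    rfl
  have hderiv : Ω (-(lieBracket Xh v₁ x))
        (G ((0 : ℝ), φ (-(0 : ℝ)) x) ((0 : ℝ), v₂ (φ (-(0 : ℝ)) x)))
      + Ω (G ((0 : ℝ), φ (-(0 : ℝ)) x) ((0 : ℝ), v₁ (φ (-(0 : ℝ)) x)))
        (-(lieBracket Xh v₂ x))
      = -(ω (lieBracket Xh v₁ x) (v₂ x) + ω (v₁ x) (lieBracket Xh v₂ x)) := by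
    rw [hval₁, hval₂]
    show (ω (-(lieBracket Xh v₁ x))) (v₂ x) + (ω (v₁ x)) (-(lieBracket Xh v₂ x))
      = -(ω (lieBracket Xh v₁ x) (v₂ x) + ω (v₁ x) (lieBracket Xh v₂ x))
    simp [map_neg, add_comm]
  rw [heqfun, hderiv] at hmain
  exact hmain
end

section
/- Symmetry of the form g^h (Lemma 1, first part): if v₁, v₂ : E → E are smooth vector fields with ω(v₁(x), v₂(x)) = 0 for all x ∈ E, then for every x ∈ E one has ω([X_h, v₁](x), v₂(x)) = ω([X_h, v₂](x), v₁(x)); that is, g^h(v₁, v₂) := ω([X_h, v₁], v₂) is symmetric in v₁ and v₂. -/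
/-- Lemma 1, first part. If `v₁, v₂ : E → E` are smooth vector fields with
`ω(v₁(x), v₂(x)) = 0` for all `x ∈ E`, then for every `x ∈ E` one has
`ω([X_h, v₁](x), v₂(x)) = ω([X_h, v₂](x), v₁(x))`; i.e. `g^h(v₁,v₂) := ω([X_h,v₁],v₂)`
is symmetric in `v₁, v₂`. -/
theorem gh_symmetric
    {E : Type*} [NormedAddCommGroup E] [NormedSpace ℝ E] [FiniteDimensional ℝ E]
    (ω : E →ₗ[ℝ] E →ₗ[ℝ] ℝ)
    (hskew : ∀ ξ η : E, ω ξ η = - ω η ξ)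
    (hnondeg : ∀ ξ : E, (∀ η : E, ω ξ η = 0) → ξ = 0)
    (h : E → ℝ) (hh : ContDiff ℝ (⊤ : ℕ∞) h)
    (Xh : E → E) (hXh : ContDiff ℝ (⊤ : ℕ∞) Xh)
    (hham : ∀ x w : E, fderiv ℝ h x w = ω w (Xh x))
    (v₁ v₂ : E → E) (hv₁ : ContDiff ℝ (⊤ : ℕ∞) v₁) (hv₂ : ContDiff ℝ (⊤ : ℕ∞) v₂)
    (hiso : ∀ x : E, ω (v₁ x) (v₂ x) = 0) :
    ∀ x : E, ω (lieBracket Xh v₁ x) (v₂ x) = ω (lieBracket Xh v₂ x) (v₁ x) := by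
  -- continuous bilinear version of ω
  let Ω : E →L[ℝ] E →L[ℝ] ℝ :=
    LinearMap.toContinuousLinearMap
      { toFun := fun ξ => LinearMap.toContinuousLinearMap (ω ξ)
        map_add' := by intro a b; ext c; simp
        map_smul' := by intro a b; ext c; simp }
  have hΩ : ∀ ξ η : E, Ω ξ η = ω ξ η := fun _ _ => rfl
  intro x
  set A := fderiv ℝ Xh x with hA
  set B₁ := fderiv ℝ v₁ x with hB₁
  set B₂ := fderiv ℝ v₂ x with hB₂
  have hv₁' : HasFDerivAt v₁ B₁ x := (hv₁.differentiable (by simp) x).hasFDerivAt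
  have hv₂' : HasFDerivAt v₂ B₂ x := (hv₂.differentiable (by simp) x).hasFDerivAt
  have hXh' : HasFDerivAt Xh A x := (hXh.differentiable (by simp) x).hasFDerivAt
  -- Step 1: derivative of the identically-zero function x ↦ ω(v₁ x, v₂ x)
  have hc : HasFDerivAt (fun y => Ω (v₁ y)) (Ω.comp B₁) x :=
    (Ω.hasFDerivAt).comp x hv₁'
  have hD1 : HasFDerivAt (fun y => Ω (v₁ y) (v₂ y))
      ((Ω (v₁ x)).comp B₂ + (Ω.comp B₁).flip (v₂ x)) x := hc.clm_apply hv₂'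
  have hzero : (fun y => Ω (v₁ y) (v₂ y)) = fun _ => (0 : ℝ) := by
    funext y; exact (hΩ (v₁ y) (v₂ y)).trans (hiso y)
  have hD0 : HasFDerivAt (fun y => Ω (v₁ y) (v₂ y)) (0 : E →L[ℝ] ℝ) x := by
    rw [hzero]; exact hasFDerivAt_const 0 x
  have hDeq := hD1.unique hD0
  have key1 : ω (v₁ x) (B₂ (Xh x)) + ω (B₁ (Xh x)) (v₂ x) = 0 := by
    have := congrArg (fun (L : E →L[ℝ] ℝ) => L (Xh x)) hDeq
    simpa [hΩ] using this
  -- Step 2: second derivative symmetry of h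
  have hf' : ∀ y, HasFDerivAt h (Ω.flip (Xh y)) y := by
    intro y
    have hd : HasFDerivAt h (fderiv ℝ h y) y := (hh.differentiable (by simp) y).hasFDerivAt
    have : fderiv ℝ h y = Ω.flip (Xh y) := by
      ext w; rw [hham y w]; rfl
    rwa [this] at hd
  have hf'' : HasFDerivAt (fun y => Ω.flip (Xh y)) (Ω.flip.comp A) x :=
    (Ω.flip.hasFDerivAt).comp x hXh'
  have key2 : ∀ u w : E, ω w (A u) = ω u (A w) := by
    intro u w
    have := second_derivative_symmetric hf' hf'' u w
    simpa [hΩ] using this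
  -- Conclude
  simp only [lieBracket, map_sub, LinearMap.sub_apply]
  have e1 : ω (B₁ (Xh x)) (v₂ x) = ω (B₂ (Xh x)) (v₁ x) := by
    have := hskew (v₁ x) (B₂ (Xh x))
    have h2 := hskew (B₂ (Xh x)) (v₁ x)
    linarith [key1, hskew (v₁ x) (B₂ (Xh x))]
  have e2 : ω (A (v₁ x)) (v₂ x) = ω (A (v₂ x)) (v₁ x) := by
    have h1 := key2 (v₁ x) (v₂ x)
    have h2 := hskew (A (v₁ x)) (v₂ x)
    have h3 := hskew (A (v₂ x)) (v₁ x)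
    linarith
  linarith
end

section
/- Tensoriality of g^h in the first argument: if v₁, v₂ : E → E are smooth vector fields with ω(v₁(x), v₂(x)) = 0 for all x ∈ E, then for every smooth function f : E → ℝ and every x ∈ E, ω([X_h, f·v₁](x), v₂(x)) = f(x) · ω([X_h, v₁](x), v₂(x)), where f·v₁ is the vector field x ↦ f(x)v₁(x). -/
/-- Tensoriality of `g^h` in the first argument: if `v₁, v₂ : E → E` are
smooth vector fields with `ω(v₁(x), v₂(x)) = 0` for all `x`, then for every smooth
`f : E → ℝ` and every `x`,
`ω([X_h, f·v₁](x), v₂(x)) = f(x) · ω([X_h, v₁](x), v₂(x))`. -/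
theorem gh_tensorial_first_argument
    {E : Type*} [NormedAddCommGroup E] [NormedSpace ℝ E] [FiniteDimensional ℝ E]
    (ω : E →ₗ[ℝ] E →ₗ[ℝ] ℝ)
    (hskew : ∀ ξ η : E, ω ξ η = - ω η ξ)
    (hnondeg : ∀ ξ : E, (∀ η : E, ω ξ η = 0) → ξ = 0)
    (h : E → ℝ) (hh : ContDiff ℝ (⊤ : ℕ∞) h)
    (Xh : E → E) (hXh : ContDiff ℝ (⊤ : ℕ∞) Xh)
    (hham : ∀ x w : E, fderiv ℝ h x w = ω w (Xh x))
    (v₁ v₂ : E → E) (hv₁ : ContDiff ℝ (⊤ : ℕ∞) v₁) (hv₂ : ContDiff ℝ (⊤ : ℕ∞) v₂)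
    (hiso : ∀ x : E, ω (v₁ x) (v₂ x) = 0)
    (f : E → ℝ) (hf : ContDiff ℝ (⊤ : ℕ∞) f) :
    ∀ x : E, ω (lieBracket Xh (fun y => f y • v₁ y) x) (v₂ x)
      = f x * ω (lieBracket Xh v₁ x) (v₂ x) := by
  intro x
  have hdf : DifferentiableAt ℝ f x := hf.differentiable (by simp) x
  have hdv : DifferentiableAt ℝ v₁ x := hv₁.differentiable (by simp) x
  have hfd : fderiv ℝ (fun y => f y • v₁ y) x
      = f x • fderiv ℝ v₁ x + (fderiv ℝ f x).smulRight (v₁ x) := fderiv_fun_smul hdf hdv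
  have key : lieBracket Xh (fun y => f y • v₁ y) x
      = f x • lieBracket Xh v₁ x + (fderiv ℝ f x (Xh x)) • v₁ x := by
    simp only [lieBracket, hfd]
    rw [(fderiv ℝ Xh x).map_smul]
    simp [ContinuousLinearMap.add_apply, ContinuousLinearMap.smul_apply,
      ContinuousLinearMap.smulRight_apply, smul_sub]
    abel
  rw [key]
  simp [hiso x, smul_eq_mul]
end

section
/- Pointwise dependence of g^h (Lemma 1, second part): let v₁, w₁, v₂, w₂ be sections of the frame s₁, …, s_n (i.e. each is of the form Σᵢ fᵢ·sᵢ with the fᵢ smooth real-valued functions) such that v₁(x₀) = w₁(x₀) and v₂(x₀) = w₂(x₀) at a point x₀ ∈ E. Then ω([X_h, v₁](x₀), v₂(x₀)) = ω([X_h, w₁](x₀), w₂(x₀)); that is, g^h(v₁, v₂)(x₀) := ω([X_h, v₁], v₂)(x₀) depends only on the values v₁(x₀) and v₂(x₀). -/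
/-- A vector field is a section of the frame `s₁, …, s_n` if it has the form
`x ↦ Σᵢ fᵢ(x) • sᵢ(x)` with smooth real-valued functions `fᵢ`. -/
def IsFrameSection {E : Type*} [NormedAddCommGroup E] [NormedSpace ℝ E] {n : ℕ}
    (s : Fin n → E → E) (v : E → E) : Prop :=
  ∃ f : Fin n → E → ℝ, (∀ i, ContDiff ℝ (⊤ : ℕ∞) (f i)) ∧ v = fun x => ∑ i, f i x • s i x

lemma key_deriv {E : Type*} [NormedAddCommGroup E] [NormedSpace ℝ E] {n : ℕ}
    (s : Fin n → E → E) (hs : ∀ i, ContDiff ℝ (⊤ : ℕ∞) (s i))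
    (f : Fin n → E → ℝ) (hf : ∀ i, ContDiff ℝ (⊤ : ℕ∞) (f i)) (x₀ : E) :
    fderiv ℝ (fun x => ∑ i, f i x • s i x) x₀ =
      ∑ i, (f i x₀ • fderiv ℝ (s i) x₀ + (fderiv ℝ (f i) x₀).smulRight (s i x₀)) := by
  rw [fderiv_fun_sum (A := fun i x => f i x • s i x) (fun i _ =>
    (((hf i).differentiable (by simp) x₀).smul ((hs i).differentiable (by simp) x₀)))]
  congr 1
  ext i : 1
  exact fderiv_smul ((hf i).differentiable (by simp) x₀) ((hs i).differentiable (by simp) x₀)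

/-- Lemma 1, second part. If `v₁, w₁, v₂, w₂` are sections of the
isotropic frame `s₁, …, s_n` with `v₁(x₀) = w₁(x₀)` and `v₂(x₀) = w₂(x₀)`, then
`ω([X_h, v₁](x₀), v₂(x₀)) = ω([X_h, w₁](x₀), w₂(x₀))`: the value `g^h(v₁,v₂)(x₀)`
depends only on `v₁(x₀)` and `v₂(x₀)`. -/
theorem gh_pointwise
    {E : Type*} [NormedAddCommGroup E] [NormedSpace ℝ E] [FiniteDimensional ℝ E]
    (ω : E →ₗ[ℝ] E →ₗ[ℝ] ℝ)
    (hskew : ∀ ξ η : E, ω ξ η = - ω η ξ)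
    (hnondeg : ∀ ξ : E, (∀ η : E, ω ξ η = 0) → ξ = 0)
    (h : E → ℝ) (hh : ContDiff ℝ (⊤ : ℕ∞) h)
    (Xh : E → E) (hXh : ContDiff ℝ (⊤ : ℕ∞) Xh)
    (hham : ∀ x w : E, fderiv ℝ h x w = ω w (Xh x))
    {n : ℕ} (s : Fin n → E → E) (hs_smooth : ∀ i, ContDiff ℝ (⊤ : ℕ∞) (s i))
    (hs_indep : ∀ x : E, LinearIndependent ℝ (fun i => s i x))
    (hs_iso : ∀ (x : E) (i j : Fin n), ω (s i x) (s j x) = 0)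
    (v₁ w₁ v₂ w₂ : E → E)
    (hv₁ : IsFrameSection s v₁) (hw₁ : IsFrameSection s w₁)
    (hv₂ : IsFrameSection s v₂) (hw₂ : IsFrameSection s w₂)
    (x₀ : E) (h₁ : v₁ x₀ = w₁ x₀) (h₂ : v₂ x₀ = w₂ x₀) :
    ω (lieBracket Xh v₁ x₀) (v₂ x₀) = ω (lieBracket Xh w₁ x₀) (w₂ x₀) := by

  obtain ⟨f₁, hf₁, hv₁e⟩ := hv₁
  obtain ⟨g₁, hg₁, hw₁e⟩ := hw₁
  obtain ⟨f₂, hf₂, hv₂e⟩ := hv₂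
  have hcoef : ∀ i, f₁ i x₀ = g₁ i x₀ := by
    have h₁' := h₁
    rw [hv₁e, hw₁e] at h₁'
    simp only at h₁'
    have hz : ∑ i, (f₁ i x₀ - g₁ i x₀) • s i x₀ = 0 := by
      simp [sub_smul, Finset.sum_sub_distrib, h₁']
    have hli := (Fintype.linearIndependent_iff.mp (hs_indep x₀)) _ hz
    intro i
    have := hli i
    linarith
  have hperp : ∀ i, ω (s i x₀) (v₂ x₀) = 0 := by
    intro i
    rw [hv₂e]
    simp only [map_sum, map_smul, smul_eq_mul]
    simp [hs_iso]
  have key : ∀ (f : Fin n → E → ℝ), (∀ i, ContDiff ℝ (⊤ : ℕ∞) (f i)) →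
      ω (lieBracket Xh (fun x => ∑ i, f i x • s i x) x₀) (v₂ x₀) =
      (∑ i, f i x₀ * ω (fderiv ℝ (s i) x₀ (Xh x₀)) (v₂ x₀))
        - ω (fderiv ℝ Xh x₀ (∑ i, f i x₀ • s i x₀)) (v₂ x₀) := by
    intro f hf
    unfold lieBracket
    rw [key_deriv s hs_smooth f hf x₀]
    simp only [map_sub, LinearMap.sub_apply, ContinuousLinearMap.sum_apply,
      ContinuousLinearMap.add_apply, ContinuousLinearMap.coe_smul', Pi.smul_apply,
      ContinuousLinearMap.smulRight_apply, map_sum, map_add, map_smul, smul_eq_mul,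
      LinearMap.add_apply, LinearMap.smul_apply, Finset.sum_apply, LinearMap.map_smul₂]
    simp only [LinearMap.coe_sum, Finset.sum_apply, LinearMap.add_apply,
      LinearMap.smul_apply, smul_eq_mul, hperp, mul_zero, add_zero]
  rw [hv₁e, hw₁e, ← h₂, key f₁ hf₁, key g₁ hg₁]
  simp [hcoef]
end

section
/- Theorem 1 for natural mechanical systems with strongly concave potential: let U : ℝ^n → ℝ be smooth and strongly concave, and let (p, q) : [0, ∞) → ℝ^n × ℝ^n be a solution of the system q̇(t) = p(t), ṗ(t) = −∇U(q(t)) whose image is bounded. Then there exists q∞ ∈ ℝ^n with ∇U(q∞) = 0 such that (p(t), q(t)) → (0, q∞) as t → +∞, and the linearization of the system at the equilibrium (0, q∞), namely the block matrix [[0, −HessU(q∞)], [I_n, 0]], is hyperbolic. -/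
open Matrix Filter

private lemma exists_eigvec {m : Type*} [Fintype m] [DecidableEq m] {K : Type*} [Field K]
    (N : Matrix m m K) (μ : K) (h : N.charpoly.IsRoot μ) :
    ∃ v : m → K, v ≠ 0 ∧ N.mulVec v = μ • v := by
  have hdet : (scalar m μ - N).det = 0 := by
    have := h
    rw [Polynomial.IsRoot, Matrix.charpoly, eval_det, matPolyEquiv_charmatrix] at this
    simpa using this
  obtain ⟨v, hv, hv0⟩ := (Matrix.exists_mulVec_eq_zero_iff).2 hdet
  refine ⟨v, hv, ?_⟩
  rw [sub_mulVec] at hv0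
  have h2 : (scalar m μ) *ᵥ v = μ • v := by
    have : (scalar m μ) = μ • (1 : Matrix m m K) := by
      ext i j; simp [Matrix.scalar_apply, Matrix.one_apply, Matrix.diagonal_apply]
    rw [this, smul_mulVec, one_mulVec]
  rw [h2] at hv0
  exact (sub_eq_zero.mp hv0).symm
private lemma matrix_part {m : ℕ} (H : Matrix (Fin m) (Fin m) ℝ) (c : ℝ) (hc : 0 < c)
    (hquad : ∀ a : Fin m → ℝ, ∑ i, ∑ j, a i * H i j * a j ≤ -c * ∑ i, a i ^ 2)
    (μ : ℂ)
    (hroot : ((Matrix.fromBlocks (0 : Matrix (Fin m) (Fin m) ℝ) (-H)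
        (1 : Matrix (Fin m) (Fin m) ℝ) (0 : Matrix (Fin m) (Fin m) ℝ)).charpoly.map
        (algebraMap ℝ ℂ)).IsRoot μ) : μ.re ≠ 0 := by
  set Hc : Matrix (Fin m) (Fin m) ℂ := H.map (algebraMap ℝ ℂ) with hHc
  have hmap : ((Matrix.fromBlocks (0 : Matrix (Fin m) (Fin m) ℝ) (-H) 1 0).map (algebraMap ℝ ℂ))
      = Matrix.fromBlocks (0 : Matrix (Fin m) (Fin m) ℂ) (-Hc) (1 : Matrix (Fin m) (Fin m) ℂ) (0 : Matrix (Fin m) (Fin m) ℂ) := by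
    rw [Matrix.fromBlocks_map]
    ext (i|i) (j|j) <;>
      simp [Hc, Matrix.one_apply, apply_ite, Complex.coe_algebraMap]
  rw [← Matrix.charpoly_map] at hroot
  rw [hmap] at hroot
  obtain ⟨v, hv, hveq⟩ := exists_eigvec _ μ hroot
  rw [Matrix.fromBlocks_mulVec] at hveq
  set x : Fin m → ℂ := v ∘ Sum.inl with hx
  set y : Fin m → ℂ := v ∘ Sum.inr with hyy
  have htop : (-Hc) *ᵥ y = μ • x := by
    have := congrFun hveq
    funext i
    have h1 := this (Sum.inl i)
    simpa [hx, hyy] using h1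
  have hbot : x = μ • y := by
    have := congrFun hveq
    funext i
    have h1 := this (Sum.inr i)
    simpa [hx, hyy] using h1
  have hy : y ≠ 0 := by
    intro hy0
    apply hv
    funext s
    cases s with
    | inl i =>
        have : x i = 0 := by rw [hbot, hy0]; simp
        simpa [hx] using this
    | inr i =>
        have : y i = 0 := by rw [hy0]; simp
        simpa [hyy] using this
  have heig : Hc *ᵥ y = (-(μ^2)) • y := by
    have : (-Hc) *ᵥ y = (μ^2) • y := by
      rw [htop, hbot, smul_smul]; ring_nf
    funext i
    have := congrFun this i
    simp only [Matrix.neg_mulVec, Pi.neg_apply] at this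
    have := neg_eq_iff_eq_neg.mp this
    simp [this]
  -- quadratic form
  set S : ℝ := ∑ i, Complex.normSq (y i) with hS
  have hSpos : 0 < S := by
    rcases Function.ne_iff.mp hy with ⟨i, hi⟩
    have : 0 < Complex.normSq (y i) := Complex.normSq_pos.mpr hi
    exact Finset.sum_pos' (fun j _ => Complex.normSq_nonneg _) ⟨i, Finset.mem_univ i, this⟩
  have hdot : star y ⬝ᵥ (Hc *ᵥ y) = -(μ^2) * (S : ℂ) := by
    rw [heig, dotProduct_smul]
    have : star y ⬝ᵥ y = (S : ℂ) := by
      rw [hS]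
      push_cast
      refine Finset.sum_congr rfl fun i _ => ?_
      simp [RCLike.star_def, mul_comm, Complex.mul_conj]
    rw [this, smul_eq_mul]
  have hre : (star y ⬝ᵥ (Hc *ᵥ y)).re ≤ -c * S := by
    have hexp : (star y ⬝ᵥ (Hc *ᵥ y)).re
        = (∑ i, ∑ j, (y i).re * H i j * (y j).re) + (∑ i, ∑ j, (y i).im * H i j * (y j).im) := by
      simp only [dotProduct, Matrix.mulVec, dotProduct, Pi.star_apply,
        Finset.mul_sum]
      rw [Complex.re_sum]
      rw [← Finset.sum_add_distrib]
      refine Finset.sum_congr rfl fun i _ => ?_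
      rw [Complex.re_sum, ← Finset.sum_add_distrib]
      refine Finset.sum_congr rfl fun j _ => ?_
      simp [Hc, Complex.mul_re, Complex.mul_im, RCLike.star_def, Complex.coe_algebraMap]
      ring
    rw [hexp]
    have h1 := hquad (fun i => (y i).re)
    have h2 := hquad (fun i => (y i).im)
    have : S = (∑ i, (y i).re ^ 2) + ∑ i, (y i).im ^ 2 := by
      rw [hS, ← Finset.sum_add_distrib]
      refine Finset.sum_congr rfl fun i _ => ?_
      simp [Complex.normSq_apply]; ring
    rw [this]
    nlinarith [h1, h2]
  have hre2 : (star y ⬝ᵥ (Hc *ᵥ y)).re = -(μ^2).re * S := by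
    rw [hdot]
    simp [Complex.mul_re]
  have hkey : c ≤ (μ^2).re := by
    rw [hre2] at hre
    nlinarith
  intro h0
  have : (μ^2).re = -(μ.im)^2 := by
    simp [pow_two, Complex.mul_re, h0]
  nlinarith [sq_nonneg μ.im]

private lemma mvt_Ici (f f' : ℝ → ℝ)
    (hf : ∀ t ∈ Set.Ici (0:ℝ), HasDerivWithinAt f (f' t) (Set.Ici 0) t)
    {a b : ℝ} (ha : 0 ≤ a) (hab : a < b) :
    ∃ ξ ∈ Set.Ioo a b, f b - f a = f' ξ * (b - a) := by
  have hcont : ContinuousOn f (Set.Icc a b) := fun t ht =>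
    ((hf t (le_trans ha ht.1)).continuousWithinAt).mono
      (fun s hs => le_trans ha hs.1)
  have hderiv : ∀ t ∈ Set.Ioo a b, HasDerivAt f (f' t) t := fun t ht =>
    (hf t (le_of_lt (lt_of_le_of_lt ha ht.1))).hasDerivAt
      (Ici_mem_nhds (lt_of_le_of_lt ha ht.1))
  obtain ⟨ξ, hξ, heq⟩ := exists_hasDerivAt_eq_slope f f' hab hcont hderiv
  refine ⟨ξ, hξ, ?_⟩
  rw [heq, div_mul_cancel₀ _ (sub_ne_zero.mpr hab.ne')]

private lemma mono_of_concave {n : ℕ} (U : EuclideanSpace ℝ (Fin n) → ℝ)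
    (hd : Differentiable ℝ (fderiv ℝ U)) {c : ℝ}
    (hconc : ∀ q ξ : EuclideanSpace ℝ (Fin n),
      fderiv ℝ (fun y => fderiv ℝ U y ξ) q ξ ≤ -c * ‖ξ‖ ^ 2)
    (x y : EuclideanSpace ℝ (Fin n)) :
    fderiv ℝ U x (x - y) - fderiv ℝ U y (x - y) ≤ -c * ‖x - y‖ ^ 2 := by
  set v := x - y with hv
  set F : EuclideanSpace ℝ (Fin n) → ℝ := fun z => fderiv ℝ U z v with hF
  have hFd : Differentiable ℝ F := hd.clm_apply (differentiable_const v)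
  set g : ℝ → ℝ := fun t => F (y + t • v) with hg
  set g' : ℝ → ℝ := fun t => fderiv ℝ F (y + t • v) v with hg'
  have hline : ∀ t : ℝ, HasDerivAt (fun s : ℝ => y + s • v) v t := fun t => by
    simpa using ((hasDerivAt_id t).smul_const v).const_add y
  have hgd : ∀ t : ℝ, HasDerivAt g (g' t) t := fun t =>
    (hFd _).hasFDerivAt.comp_hasDerivAt t (hline t)
  have hcont : ContinuousOn g (Set.Icc 0 1) := fun t _ =>
    (hgd t).continuousAt.continuousWithinAt
  obtain ⟨ξ, _, heq⟩ := exists_hasDerivAt_eq_slope g g' zero_lt_one hcont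
    (fun t _ => hgd t)
  have hb : g' ξ ≤ -c * ‖v‖ ^ 2 := hconc (y + ξ • v) v
  have h1 : g 1 = fderiv ℝ U x v := by simp [hg, hF, hv]
  have h0 : g 0 = fderiv ℝ U y v := by simp [hg, hF]
  rw [h1, h0] at heq
  have : fderiv ℝ U x v - fderiv ℝ U y v = g' ξ := by
    rw [heq]; field_simp; ring
  linarith [hb, this.le, this.ge]

private lemma exists_crit {n : ℕ} (U : EuclideanSpace ℝ (Fin n) → ℝ)
    (hU : ContDiff ℝ (⊤ : ℕ∞) U) {c : ℝ} (hc : 0 < c)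
    (hmono : ∀ x y : EuclideanSpace ℝ (Fin n),
      fderiv ℝ U x (x - y) - fderiv ℝ U y (x - y) ≤ -c * ‖x - y‖ ^ 2) :
    ∃ a : EuclideanSpace ℝ (Fin n), fderiv ℝ U a = 0 := by
  have hdiffU : Differentiable ℝ U := (hU.of_le (WithTop.coe_le_coe.mpr le_top) : ContDiff ℝ 2 U).differentiable (by norm_num)
  -- upper bound
  have hub : ∀ v : EuclideanSpace ℝ (Fin n),
      U v ≤ U 0 + ‖fderiv ℝ U 0‖ * ‖v‖ - c / 2 * ‖v‖ ^ 2 := by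
    intro v
    set G : ℝ → ℝ := fun t => U (t • v) - t * (fderiv ℝ U 0 v) + (c * ‖v‖ ^ 2 / 2) * t ^ 2 with hG
    set G' : ℝ → ℝ := fun t =>
      fderiv ℝ U (t • v) v - fderiv ℝ U 0 v + (c * ‖v‖ ^ 2 / 2) * (2 * t) with hG'
    have hGd : ∀ t : ℝ, HasDerivAt G (G' t) t := by
      intro t
      have h1 : HasDerivAt (fun s : ℝ => U (s • v)) (fderiv ℝ U (t • v) v) t := by
        have hline : HasDerivAt (fun s : ℝ => s • v) v t := by
          simpa using (hasDerivAt_id t).smul_const v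
        exact (hdiffU _).hasFDerivAt.comp_hasDerivAt t hline
      have h2 : HasDerivAt (fun s : ℝ => s * (fderiv ℝ U 0 v)) (fderiv ℝ U 0 v) t := by
        simpa using (hasDerivAt_id t).mul_const (fderiv ℝ U 0 v)
      have h3 : HasDerivAt (fun s : ℝ => (c * ‖v‖ ^ 2 / 2) * s ^ 2)
          ((c * ‖v‖ ^ 2 / 2) * (2 * t)) t := by
        simpa [mul_comm] using (hasDerivAt_pow 2 t).const_mul (c * ‖v‖ ^ 2 / 2)
      exact (h1.sub h2).add h3
    have hG'le : ∀ t ∈ Set.Ioo (0:ℝ) 1, G' t ≤ 0 := by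
      intro t ht
      have hm := hmono (t • v) 0
      rw [sub_zero] at hm
      have hsm : ∀ z : EuclideanSpace ℝ (Fin n), fderiv ℝ U z (t • v) = t * fderiv ℝ U z v := by
        intro z; rw [(fderiv ℝ U z).map_smul]; simp
      rw [hsm, hsm, norm_smul, Real.norm_eq_abs] at hm
      have htpos : 0 < t := ht.1
      have habs : |t| = t := abs_of_pos htpos
      rw [habs] at hm
      have hkey : fderiv ℝ U (t • v) v - fderiv ℝ U 0 v ≤ -c * t * ‖v‖ ^ 2 := by
        have h := hm
        nlinarith [htpos, sq_nonneg (t * ‖v‖)]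
      simp only [hG']
      nlinarith
    obtain ⟨ξ, hξ, heq⟩ := exists_hasDerivAt_eq_slope G G' zero_lt_one
      (fun t _ => (hGd t).continuousAt.continuousWithinAt) (fun t ht => hGd t)
    have hle : G 1 - G 0 ≤ 0 := by
      have := hG'le ξ hξ
      rw [heq] at this
      simpa using this
    have hG1 : G 1 = U v - fderiv ℝ U 0 v + c * ‖v‖ ^ 2 / 2 := by simp [hG]
    have hG0 : G 0 = U 0 := by simp [hG]
    rw [hG1, hG0] at hle
    have hop : fderiv ℝ U 0 v ≤ ‖fderiv ℝ U 0‖ * ‖v‖ :=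
      le_trans (le_abs_self _) ((fderiv ℝ U 0).le_opNorm v)
    nlinarith
  set R : ℝ := (2 * ‖fderiv ℝ U 0‖ + 2) / c with hR
  have hRpos : 0 < R := by positivity
  have hcoerc : ∀ v : EuclideanSpace ℝ (Fin n), R ≤ ‖v‖ → U v < U 0 := by
    intro v hv
    have h1 := hub v
    have h2 : c * ‖v‖ ≥ 2 * ‖fderiv ℝ U 0‖ + 2 := by
      rw [hR] at hv
      calc 2 * ‖fderiv ℝ U 0‖ + 2 = c * ((2 * ‖fderiv ℝ U 0‖ + 2) / c) := by field_simp
      _ ≤ c * ‖v‖ := by nlinarith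
    have hvpos : 0 < ‖v‖ := lt_of_lt_of_le hRpos hv
    nlinarith [norm_nonneg (fderiv ℝ U 0)]
  obtain ⟨x₀, hx₀mem, hmax⟩ := (isCompact_closedBall (0 : EuclideanSpace ℝ (Fin n)) R).exists_isMaxOn
    ⟨0, by simp [hRpos.le]⟩ (hU.continuous.continuousOn)
  have hglob : IsMaxOn U Set.univ x₀ := by
    intro y _
    by_cases hy : ‖y‖ ≤ R
    · exact hmax (by simpa [Metric.mem_closedBall, dist_eq_norm] using hy)
    · have : U y < U 0 := hcoerc y (le_of_lt (lt_of_not_ge hy))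
      have h0 : U 0 ≤ U x₀ := hmax (by simp [hRpos.le])
      exact le_trans this.le h0
  exact ⟨x₀, (hglob.isLocalMax Filter.univ_mem).fderiv_eq_zero⟩

private lemma quad_expand {n : ℕ} (U : EuclideanSpace ℝ (Fin n) → ℝ)
    (hd : Differentiable ℝ (fderiv ℝ U)) (x : EuclideanSpace ℝ (Fin n)) (a : Fin n → ℝ) :
    ∑ i, ∑ j, a i * (fderiv ℝ (fun y => fderiv ℝ U y (EuclideanSpace.single j 1)) x
        (EuclideanSpace.single i 1)) * a j
      = fderiv ℝ (fun y => fderiv ℝ U y (∑ k, a k • EuclideanSpace.single k 1)) x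
          (∑ k, a k • EuclideanSpace.single k 1) := by
  set F := fderiv ℝ (fderiv ℝ U) x with hF
  have hswap : ∀ v w, fderiv ℝ (fun y => fderiv ℝ U y v) x w = F w v := fun v w => by
    rw [hF, fderiv_clm_apply (hd x) (differentiableAt_const v)]
    simp
  simp only [hswap]
  have expand : F (∑ k, a k • EuclideanSpace.single k (1:ℝ)) (∑ k, a k • EuclideanSpace.single k (1:ℝ))
      = ∑ i, ∑ j, a i * (F (EuclideanSpace.single i (1:ℝ))) (EuclideanSpace.single j (1:ℝ)) * a j := by
    have h1 : F (∑ k, a k • EuclideanSpace.single k (1:ℝ))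
        = ∑ k, a k • F (EuclideanSpace.single k (1:ℝ)) := by
      rw [map_sum]
      exact Finset.sum_congr rfl fun k _ => map_smul F _ _
    rw [h1, ContinuousLinearMap.sum_apply]
    refine Finset.sum_congr rfl fun i _ => ?_
    rw [ContinuousLinearMap.smul_apply, map_sum, Finset.smul_sum]
    refine Finset.sum_congr rfl fun j _ => ?_
    rw [_root_.map_smul]
    simp only [smul_eq_mul]
    ring
  rw [expand]

private lemma norm_sum_single {n : ℕ} (a : Fin n → ℝ) :
    ‖∑ k, a k • EuclideanSpace.single k (1:ℝ)‖ ^ 2 = ∑ i, a i ^ 2 := by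
  have happ : ∀ j, (∑ k, a k • EuclideanSpace.single k (1:ℝ)) j = a j := by
    intro j
    have : (∑ k, a k • EuclideanSpace.single k (1:ℝ)) j
        = ∑ k, a k * (if j = k then (1:ℝ) else 0) := by
      rw [WithLp.ofLp_sum, Finset.sum_apply]
      refine Finset.sum_congr rfl fun k _ => ?_
      simp [EuclideanSpace.single_apply]
    rw [this]
    simp [Finset.sum_ite_eq]
  rw [EuclideanSpace.norm_eq]
  rw [Real.sq_sqrt (by positivity)]
  refine Finset.sum_congr rfl fun i _ => ?_
  rw [happ]
  simp [sq_abs]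

set_option maxHeartbeats 2000000 in
/-- Theorem 1 for natural mechanical systems with strongly concave
potential. Let `U : ℝ^n → ℝ` be smooth and strongly concave, and let
`(p, q) : [0, ∞) → ℝ^n × ℝ^n` be a solution of `q̇ = p, ṗ = −∇U(q)` with bounded image.
Then there exists `q∞` with `∇U(q∞) = 0` such that `(p(t), q(t)) → (0, q∞)` as
`t → +∞`, and the linearization `[[0, −HessU(q∞)], [I_n, 0]]` at the equilibrium
`(0, q∞)` is hyperbolic (no complex eigenvalue on the imaginary axis). -/
theorem bounded_trajectory_tendsto_hyperbolic_equilibrium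
    {n : ℕ} (U : EuclideanSpace ℝ (Fin n) → ℝ) (hU : ContDiff ℝ (⊤ : ℕ∞) U)
    (hconc : ∃ c : ℝ, 0 < c ∧ ∀ q ξ : EuclideanSpace ℝ (Fin n),
      fderiv ℝ (fun y => fderiv ℝ U y ξ) q ξ ≤ -c * ‖ξ‖ ^ 2)
    (p q : ℝ → EuclideanSpace ℝ (Fin n))
    (hq : ∀ t ∈ Set.Ici (0 : ℝ), HasDerivWithinAt q (p t) (Set.Ici 0) t)
    (hp : ∀ t ∈ Set.Ici (0 : ℝ),
      HasDerivWithinAt p (-gradient U (q t)) (Set.Ici 0) t)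
    (hbd : Bornology.IsBounded ((fun t => (p t, q t)) '' Set.Ici (0 : ℝ))) :
    ∃ qinf : EuclideanSpace ℝ (Fin n),
      gradient U qinf = 0 ∧
      Tendsto (fun t => (p t, q t)) atTop (nhds (0, qinf)) ∧
      (∀ μ : ℂ,
        ((Matrix.fromBlocks (0 : Matrix (Fin n) (Fin n) ℝ)
              (-(Matrix.of fun i j : Fin n =>
                fderiv ℝ (fun y => fderiv ℝ U y (EuclideanSpace.single j 1)) qinf
                  (EuclideanSpace.single i 1)))
              (1 : Matrix (Fin n) (Fin n) ℝ)
              (0 : Matrix (Fin n) (Fin n) ℝ)).charpoly.map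
            (algebraMap ℝ ℂ)).IsRoot μ →
          μ.re ≠ 0) := by
  obtain ⟨c, hc, hconc⟩ := hconc
  have hU2 : ContDiff ℝ 2 U := hU.of_le (WithTop.coe_le_coe.mpr le_top)
  have hdiffU : Differentiable ℝ U := hU2.differentiable (by norm_num)
  have hd : Differentiable ℝ (fderiv ℝ U) :=
    (hU2.fderiv_right (m := 1) (by norm_num)).differentiable one_ne_zero
  have hmono := mono_of_concave U hd hconc
  obtain ⟨a, ha⟩ := exists_crit U hU hc hmono
  have hgradeq : ∀ x, gradient U x
      = (InnerProductSpace.toDual ℝ (EuclideanSpace ℝ (Fin n))).symm (fderiv ℝ U x) :=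
    fun x => rfl
  have hgrada : gradient U a = 0 := by rw [hgradeq, ha, map_zero]
  have ginner : ∀ x v : EuclideanSpace ℝ (Fin n),
      (inner ℝ (gradient U x) v : ℝ) = fderiv ℝ U x v := fun x v => by
    rw [hgradeq, InnerProductSpace.toDual_symm_apply]
  -- bounds
  obtain ⟨M, hM⟩ := isBounded_iff_forall_norm_le.mp hbd
  have hMp : ∀ t : ℝ, 0 ≤ t → ‖p t‖ ≤ M := fun t ht =>
    le_trans (norm_fst_le (p t, q t)) (hM _ ⟨t, ht, rfl⟩)
  have hMq : ∀ t : ℝ, 0 ≤ t → ‖q t‖ ≤ M := fun t ht =>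
    le_trans (norm_snd_le (p t, q t)) (hM _ ⟨t, ht, rfl⟩)
  have hM0 : 0 ≤ M := le_trans (norm_nonneg _) (hMp 0 le_rfl)
  set φ : ℝ → ℝ := fun t => (inner ℝ (q t - a) (q t - a) : ℝ) with hφdef
  set ψ : ℝ → ℝ := fun t => 2 * (inner ℝ (q t - a) (p t) : ℝ) with hψdef
  set χ : ℝ → ℝ := fun t =>
    2 * ((inner ℝ (q t - a) (-gradient U (q t)) : ℝ) + (inner ℝ (p t) (p t) : ℝ)) with hχdef
  have hqa : ∀ t ∈ Set.Ici (0:ℝ), HasDerivWithinAt (fun s => q s - a) (p t) (Set.Ici 0) t :=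
    fun t ht => (hq t ht).sub_const a
  have hφ' : ∀ t ∈ Set.Ici (0:ℝ), HasDerivWithinAt φ (ψ t) (Set.Ici 0) t := by
    intro t ht
    have h := HasDerivWithinAt.inner ℝ (hqa t ht) (hqa t ht)
    refine h.congr_deriv ?_
    show _ = 2 * inner ℝ (q t - a) (p t)
    rw [real_inner_comm (q t - a) (p t)]
    ring
  have hψ' : ∀ t ∈ Set.Ici (0:ℝ), HasDerivWithinAt ψ (χ t) (Set.Ici 0) t := by
    intro t ht
    have h := (HasDerivWithinAt.inner ℝ (hqa t ht) (hp t ht)).const_mul 2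
    convert h using 1
  have hφval : ∀ t, φ t = ‖q t - a‖ ^ 2 := fun t => real_inner_self_eq_norm_sq _
  have hφnn : ∀ t, 0 ≤ φ t := fun t => by rw [hφval]; positivity
  have hqabd : ∀ t : ℝ, 0 ≤ t → ‖q t - a‖ ≤ M + ‖a‖ := fun t ht =>
    le_trans (norm_sub_le _ _) (add_le_add_left (hMq t ht) _)
  have hφbd : ∀ t : ℝ, 0 ≤ t → φ t ≤ (M + ‖a‖) ^ 2 := fun t ht => by
    rw [hφval]
    exact pow_le_pow_left₀ (norm_nonneg _) (hqabd t ht) 2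
  have hψbd : ∀ t : ℝ, 0 ≤ t → |ψ t| ≤ 2 * ((M + ‖a‖) * M) := by
    intro t ht
    rw [hψdef]
    rw [abs_mul, abs_two]
    have h1 : |(inner ℝ (q t - a) (p t) : ℝ)| ≤ ‖q t - a‖ * ‖p t‖ := abs_real_inner_le_norm _ _
    have h2 : ‖q t - a‖ * ‖p t‖ ≤ (M + ‖a‖) * M :=
      mul_le_mul (hqabd t ht) (hMp t ht) (norm_nonneg _) (by positivity)
    nlinarith
  have hχlb : ∀ t : ℝ, 0 ≤ t →
      2 * c * φ t + 2 * (inner ℝ (p t) (p t) : ℝ) ≤ χ t := by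
    intro t ht
    have hm := hmono (q t) a
    rw [ha] at hm
    simp only [ContinuousLinearMap.zero_apply, sub_zero] at hm
    have h1 : (inner ℝ (q t - a) (-gradient U (q t)) : ℝ) ≥ c * φ t := by
      rw [inner_neg_right, real_inner_comm, ginner]
      rw [hφval]
      nlinarith
    simp only [hχdef]
    nlinarith
  have hχnn : ∀ t : ℝ, 0 ≤ t → 0 ≤ χ t := fun t ht => by
    have := hχlb t ht
    have h2 : (0:ℝ) ≤ (inner ℝ (p t) (p t) : ℝ) := real_inner_self_nonneg
    nlinarith [hφnn t, hc.le]
  -- ψ nondecreasing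
  have hψmono : ∀ s t : ℝ, 0 ≤ s → s ≤ t → ψ s ≤ ψ t := by
    intro s t hs hst
    rcases eq_or_lt_of_le hst with rfl | hlt
    · exact le_rfl
    obtain ⟨ξ, hξ, heq⟩ := mvt_Ici ψ χ hψ' hs hlt
    have := hχnn ξ (le_of_lt (lt_of_le_of_lt hs hξ.1))
    nlinarith
  -- ψ nonpositive
  have hψnonpos : ∀ t : ℝ, 0 ≤ t → ψ t ≤ 0 := by
    intro t₀ ht₀
    by_contra hcon
    push_neg at hcon
    set d := ψ t₀ with hdd
    set T := t₀ + ((M + ‖a‖) ^ 2 + 1) / d with hT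
    have hTgt : t₀ < T := by
      rw [hT]
      have : 0 < ((M + ‖a‖) ^ 2 + 1) / d := div_pos (by positivity) hcon
      linarith
    obtain ⟨ξ, hξ, heq⟩ := mvt_Ici φ ψ hφ' ht₀ hTgt
    have hψξ : d ≤ ψ ξ := hψmono t₀ ξ ht₀ hξ.1.le
    have hprod : d * (T - t₀) ≤ ψ ξ * (T - t₀) :=
      mul_le_mul_of_nonneg_right hψξ (by linarith)
    have hdT : d * (T - t₀) = (M + ‖a‖) ^ 2 + 1 := by
      rw [hT]
      field_simp
      ring
    have hφT : φ T ≤ (M + ‖a‖) ^ 2 := hφbd T (by linarith)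
    have hφt₀ : 0 ≤ φ t₀ := hφnn t₀
    nlinarith
  -- φ nonincreasing
  have hφanti : ∀ s t : ℝ, 0 ≤ s → s ≤ t → φ t ≤ φ s := by
    intro s t hs hst
    rcases eq_or_lt_of_le hst with rfl | hlt
    · exact le_rfl
    obtain ⟨ξ, hξ, heq⟩ := mvt_Ici φ ψ hφ' hs hlt
    have := hψnonpos ξ (le_of_lt (lt_of_le_of_lt hs hξ.1))
    nlinarith
  -- ψ → 0
  have hψ0 : Tendsto ψ atTop (nhds 0) := by
    set ψp : ℝ → ℝ := fun t => ψ (max t 0) with hψp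
    have hmono' : Monotone ψp := fun s t hst =>
      hψmono _ _ (le_max_right _ _) (max_le_max hst le_rfl)
    have hbdd : BddAbove (Set.range ψp) := by
      refine ⟨0, ?_⟩
      rintro _ ⟨t, rfl⟩
      exact hψnonpos _ (le_max_right _ _)
    have hl := tendsto_atTop_ciSup hmono' hbdd
    set l := ⨆ t, ψp t with hldef
    have hψeq : ψp =ᶠ[atTop] ψ :=
      (eventually_ge_atTop 0).mono fun t ht => by rw [hψp]; simp [max_eq_left ht]
    have hψtend : Tendsto ψ atTop (nhds l) := hl.congr' hψeq
    have hlle : l ≤ 0 := ciSup_le fun t => hψnonpos _ (le_max_right _ _)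
    have hlge : 0 ≤ l := by
      by_contra hl0
      push_neg at hl0
      set t := (φ 0 + 1) / (-l) with htdef
      have htpos : 0 < t := by
        rw [htdef]
        have h0 := hφnn 0
        exact div_pos (by linarith) (by linarith)
      obtain ⟨ξ, hξ, heq⟩ := mvt_Ici φ ψ hφ' le_rfl htpos
      have hψξl : ψ ξ ≤ l := by
        have h1 : ψp ξ ≤ l := le_ciSup hbdd ξ
        simp only [hψp] at h1
        rwa [max_eq_left hξ.1.le] at h1
      have hlt : l * t = -(φ 0 + 1) := by
        rw [htdef]
        have hlne : (-l) ≠ 0 := by linarith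
        have hlne2 : l ≠ 0 := by linarith
        field_simp
      have h3 : φ t - φ 0 ≤ l * t := by
        rw [heq, sub_zero]
        exact mul_le_mul_of_nonneg_right hψξl htpos.le
      have := hφnn t
      nlinarith
    have : l = 0 := le_antisymm hlle hlge
    rwa [this] at hψtend
  -- φ → 0
  have hφ0 : Tendsto φ atTop (nhds 0) := by
    have key : ∀ t : ℝ, 1 ≤ t → φ t ≤ (ψ t - ψ (t - 1)) / (2 * c) := by
      intro t ht
      have h1 : (0:ℝ) ≤ t - 1 := by linarith
      have h2 : t - 1 < t := by linarith
      obtain ⟨ξ, hξ, heq⟩ := mvt_Ici ψ χ hψ' h1 h2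
      have hξ0 : 0 ≤ ξ := le_trans h1 hξ.1.le
      have h3 : 2 * c * φ ξ ≤ χ ξ := by
        have := hχlb ξ hξ0
        have h4 : (0:ℝ) ≤ (inner ℝ (p ξ) (p ξ) : ℝ) := real_inner_self_nonneg
        linarith
      have h5 : φ t ≤ φ ξ := hφanti ξ t hξ0 hξ.2.le
      have h6 : χ ξ * (t - (t - 1)) = χ ξ := by ring_nf
      rw [h6] at heq
      rw [le_div_iff₀ (by positivity)]
      nlinarith
    have hshift : Tendsto (fun t : ℝ => ψ (t - 1)) atTop (nhds 0) := by
      have h1 : Tendsto (fun t : ℝ => t - 1) atTop atTop :=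
        tendsto_atTop_add_const_right atTop (-1) tendsto_id
      exact hψ0.comp h1
    have hrhs : Tendsto (fun t => (ψ t - ψ (t - 1)) / (2 * c)) atTop (nhds 0) := by
      have := (hψ0.sub hshift).div_const (2 * c)
      simpa using this
    refine tendsto_of_tendsto_of_tendsto_of_le_of_le' tendsto_const_nhds hrhs
      ((eventually_ge_atTop 0).mono fun t _ => hφnn t)
      ((eventually_ge_atTop 1).mono fun t ht => key t ht)
  -- q → a
  have hqtend : Tendsto q atTop (nhds a) := by
    rw [tendsto_iff_norm_sub_tendsto_zero]
    have hsq : Tendsto (fun t => Real.sqrt (φ t)) atTop (nhds 0) := by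
      have := (Real.continuous_sqrt.tendsto 0).comp hφ0
      simpa [Function.comp_def] using this
    refine hsq.congr fun t => ?_
    rw [hφval, Real.sqrt_sq (norm_nonneg _)]
  -- energy
  set Ef : ℝ → ℝ := fun t => (inner ℝ (p t) (p t) : ℝ) + 2 * U (q t) with hEfdef
  have hEf' : ∀ t ∈ Set.Ici (0:ℝ), HasDerivWithinAt Ef 0 (Set.Ici 0) t := by
    intro t ht
    have hpp := HasDerivWithinAt.inner ℝ (hp t ht) (hp t ht)
    have hUq : HasDerivWithinAt (fun s => U (q s)) (fderiv ℝ U (q t) (p t)) (Set.Ici 0) t :=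
      (hdiffU (q t)).hasFDerivAt.comp_hasDerivWithinAt t (hq t ht)
    have h := hpp.add (hUq.const_mul 2)
    refine h.congr_deriv ?_
    rw [← ginner]
    simp only [inner_neg_left, inner_neg_right, real_inner_comm (p t) (gradient U (q t))]
    ring
  have hEconst : ∀ t : ℝ, 0 ≤ t → Ef t = Ef 0 := by
    intro t ht
    rcases eq_or_lt_of_le ht with rfl | hlt
    · rfl
    obtain ⟨ξ, hξ, heq⟩ := mvt_Ici Ef (fun _ => 0) hEf' le_rfl hlt
    simp at heq
    linarith
  set K : ℝ := Ef 0 - 2 * U a with hKdef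
  have hUqa : Tendsto (fun t => U (q t)) atTop (nhds (U a)) :=
    (hU.continuous.tendsto a).comp hqtend
  have hpptend : Tendsto (fun t => (inner ℝ (p t) (p t) : ℝ)) atTop (nhds K) := by
    have h2 : Tendsto (fun t => Ef 0 - 2 * U (q t)) atTop (nhds K) := by
      rw [hKdef]
      exact tendsto_const_nhds.sub (hUqa.const_mul 2)
    refine h2.congr' ?_
    refine (eventually_ge_atTop 0).mono fun t ht => ?_
    have := hEconst t ht
    rw [hEfdef] at this ⊢
    simp only at this ⊢
    linarith
  have hK0 : 0 ≤ K :=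
    ge_of_tendsto hpptend ((eventually_ge_atTop 0).mono fun t _ =>
      real_inner_self_nonneg)
  have hKle : K ≤ 0 := by
    by_contra hcon
    push_neg at hcon
    have hgradtend : Tendsto (fun t => gradient U (q t)) atTop (nhds 0) := by
      have hgc : Continuous (gradient U) := by
        have h1 : Continuous (fderiv ℝ U) := hU.continuous_fderiv (by simp)
        exact ((InnerProductSpace.toDual ℝ
          (EuclideanSpace ℝ (Fin n))).symm.continuous.comp h1)
      have := (hgc.tendsto a).comp hqtend
      rwa [hgrada] at this
    have hsub0 : Tendsto (fun t => q t - a) atTop (nhds 0) := by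
      have := hqtend.sub (tendsto_const_nhds (x := a))
      simpa using this
    have hinner1 : Tendsto (fun t => (inner ℝ (q t - a) (-gradient U (q t)) : ℝ))
        atTop (nhds 0) := by
      have := Tendsto.inner (𝕜 := ℝ) hsub0 hgradtend.neg
      simpa using this
    have hχtend : Tendsto χ atTop (nhds (2 * K)) := by
      have := (hinner1.add hpptend).const_mul 2
      rw [hχdef]
      simpa using this
    have hev : ∀ᶠ t in atTop, K < χ t :=
      hχtend.eventually (eventually_gt_nhds (by linarith))
    obtain ⟨T₀, hT₀⟩ := eventually_atTop.mp hev
    set T := max T₀ 0 with hTdef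
    have hT0 : 0 ≤ T := le_max_right _ _
    set t := T + (2 * ((M + ‖a‖) * M) + 1) / K with htdef
    have hTt : T < t := by
      rw [htdef]
      have : 0 < (2 * ((M + ‖a‖) * M) + 1) / K := div_pos (by positivity) hcon
      linarith
    obtain ⟨ξ, hξ, heq⟩ := mvt_Ici ψ χ hψ' hT0 hTt
    have hχξ : K < χ ξ := hT₀ ξ (le_trans (le_max_left _ _) hξ.1.le)
    have hprod : K * (t - T) ≤ χ ξ * (t - T) :=
      mul_le_mul_of_nonneg_right hχξ.le (by linarith)
    have hKt : K * (t - T) = 2 * ((M + ‖a‖) * M) + 1 := by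
      rw [htdef]
      field_simp
      ring
    have h1 : ψ t ≤ 0 := hψnonpos t (by linarith)
    have h2 : |ψ T| ≤ 2 * ((M + ‖a‖) * M) := hψbd T hT0
    have h3 : -(2 * ((M + ‖a‖) * M)) ≤ ψ T := neg_le_of_abs_le h2
    nlinarith
  have hKzero : K = 0 := le_antisymm hKle hK0
  have hptend : Tendsto p atTop (nhds 0) := by
    rw [tendsto_iff_norm_sub_tendsto_zero]
    have hpp0 : Tendsto (fun t => (inner ℝ (p t) (p t) : ℝ)) atTop (nhds 0) := by
      rwa [hKzero] at hpptend
    have hsq : Tendsto (fun t => Real.sqrt ((inner ℝ (p t) (p t) : ℝ))) atTop (nhds 0) := by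
      have := (Real.continuous_sqrt.tendsto 0).comp hpp0
      simpa [Function.comp_def] using this
    refine hsq.congr fun t => ?_
    rw [real_inner_self_eq_norm_sq, Real.sqrt_sq (norm_nonneg _), sub_zero]
  refine ⟨a, hgrada, hptend.prodMk_nhds hqtend, ?_⟩
  intro μ hroot
  refine matrix_part (Matrix.of fun i j : Fin n =>
    fderiv ℝ (fun y => fderiv ℝ U y (EuclideanSpace.single j 1)) a
      (EuclideanSpace.single i 1)) c hc ?_ μ hroot
  intro w
  have hq1 := quad_expand U hd a w
  have hq2 := norm_sum_single w
  have hq3 := hconc a (∑ k, w k • EuclideanSpace.single k (1:ℝ))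
  rw [hq2] at hq3
  calc ∑ i, ∑ j, w i * (Matrix.of fun i j : Fin n =>
        fderiv ℝ (fun y => fderiv ℝ U y (EuclideanSpace.single j 1)) a
          (EuclideanSpace.single i 1)) i j * w j
      = ∑ i, ∑ j, w i * (fderiv ℝ (fun y => fderiv ℝ U y (EuclideanSpace.single j 1)) a
          (EuclideanSpace.single i 1)) * w j := by
        refine Finset.sum_congr rfl fun i _ => Finset.sum_congr rfl fun j _ => ?_
        rw [Matrix.of_apply]
    _ = fderiv ℝ (fun y => fderiv ℝ U y (∑ k, w k • EuclideanSpace.single k 1)) a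
          (∑ k, w k • EuclideanSpace.single k 1) := hq1
    _ ≤ -c * ∑ i, w i ^ 2 := hq3
end

section
/- Transversality of the moving Lagrangian subspaces to the vertical distribution under regularity: fix x₀ ∈ ℝ^n × ℝ^n such that the matrix (∂²h/∂pᵢ∂pⱼ(x₀)) is invertible. Then there exists ε > 0 such that for every t with 0 < |t| < ε the subspace J_{x₀}(t) is transversal to the vertical subspace, i.e. J_{x₀}(t) ∩ (ℝ^n × {0}) = {0}. -/
/-- The standard symplectic form on `ℝ^n × ℝ^n`:
`ω((p, q), (p', q')) = ⟨p, q'⟩ − ⟨p', q⟩`. -/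
def ωstd {n : ℕ} (u v : (Fin n → ℝ) × (Fin n → ℝ)) : ℝ :=
  (∑ i, u.1 i * v.2 i) - ∑ i, v.1 i * u.2 i

/-- The vertical distribution `ℝ^n × {0}` as a subspace of `ℝ^n × ℝ^n`. -/
def verticalSubspace (n : ℕ) : Submodule ℝ ((Fin n → ℝ) × (Fin n → ℝ)) :=
  (⊤ : Submodule ℝ (Fin n → ℝ)).prod (⊥ : Submodule ℝ (Fin n → ℝ))

/-- Auxiliary: if the entries of a time-dependent matrix all vanish at `t = 0` and are
differentiable there with an invertible derivative matrix, then for all small nonzero `t`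
the matrix is invertible (as a map via `mulVec`). -/
lemma aux_small_time_injective {n : ℕ} (g : Fin n → Fin n → ℝ → ℝ) (d : Fin n → Fin n → ℝ)
    (hg0 : ∀ i j, g i j 0 = 0)
    (hgd : ∀ i j, HasDerivAt (g i j) (d i j) 0)
    (hd : IsUnit (Matrix.of d)) :
    ∃ ε : ℝ, 0 < ε ∧ ∀ t : ℝ, 0 < |t| → |t| < ε →
      Function.Injective (Matrix.of fun i j => g i j t).mulVec := by
  have hslope : ∀ i j, Filter.Tendsto (fun t : ℝ => t⁻¹ * g i j t) (nhdsWithin 0 {x | x ≠ 0})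
      (nhds (d i j)) := by
    intro i j
    have := hasDerivAt_iff_tendsto_slope.mp (hgd i j)
    have heq : slope (g i j) 0 = fun t => t⁻¹ * g i j t := by
      funext t
      simp [slope, hg0 i j, div_eq_inv_mul]
    rwa [heq] at this
  have hM : Filter.Tendsto (fun t : ℝ => (Matrix.of fun i j => t⁻¹ * g i j t))
      (nhdsWithin 0 {x | x ≠ 0}) (nhds (Matrix.of d)) := by
    refine tendsto_pi_nhds.mpr ?_
    intro i
    rw [tendsto_pi_nhds]
    intro j
    exact hslope i j
  have hdet : Filter.Tendsto (fun t : ℝ => (Matrix.of fun i j => t⁻¹ * g i j t).det)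
      (nhdsWithin 0 {x | x ≠ 0}) (nhds (Matrix.of d).det) :=
    ((Continuous.matrix_det continuous_id).continuousAt.tendsto).comp hM
  have hdne : (Matrix.of d).det ≠ 0 := ((Matrix.isUnit_iff_isUnit_det _).mp hd).ne_zero
  have hev : ∀ᶠ t in nhdsWithin 0 {x : ℝ | x ≠ 0},
      (Matrix.of fun i j => t⁻¹ * g i j t).det ≠ 0 := hdet.eventually_ne hdne
  obtain ⟨ε, hε, hball⟩ := Metric.mem_nhdsWithin_iff.1 hev
  refine ⟨ε, hε, fun t ht htε => ?_⟩
  have ht0 : t ≠ 0 := fun hh => by simp [hh] at ht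
  have hdist : dist t 0 < ε := by rwa [Real.dist_eq, sub_zero]
  have hdet' : (Matrix.of fun i j => t⁻¹ * g i j t).det ≠ 0 :=
    hball ⟨Metric.mem_ball.mpr hdist, ht0⟩
  have hunit : IsUnit (Matrix.of fun i j => t⁻¹ * g i j t) :=
    (Matrix.isUnit_iff_isUnit_det _).mpr (isUnit_iff_ne_zero.mpr hdet')
  have hinj : Function.Injective (Matrix.of fun i j => t⁻¹ * g i j t).mulVec :=
    Matrix.mulVec_injective_iff_isUnit.mpr hunit
  intro v w hvw
  apply hinj
  have : (Matrix.of fun i j => t⁻¹ * g i j t) = t⁻¹ • (Matrix.of fun i j => g i j t) := by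
    ext i j; simp [Matrix.smul_apply]
  rw [this, Matrix.smul_mulVec, Matrix.smul_mulVec, hvw]

/-- Auxiliary: if the "vertical block" of a continuous linear map `L` is injective
(as a matrix acting by `mulVec`), then the image of the vertical subspace under `L`
meets the vertical subspace trivially. -/
lemma aux_transversal {n : ℕ}
    (L : ((Fin n → ℝ) × (Fin n → ℝ)) →L[ℝ] ((Fin n → ℝ) × (Fin n → ℝ)))
    (hinj : Function.Injective
      (Matrix.of fun i j : Fin n => (L ((Pi.single j 1 : Fin n → ℝ), (0 : Fin n → ℝ))).2 i).mulVec) :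
    Submodule.map (L : ((Fin n → ℝ) × (Fin n → ℝ)) →ₗ[ℝ] _) (verticalSubspace n)
      ⊓ verticalSubspace n = ⊥ := by
  rw [Submodule.eq_bot_iff]
  rintro x ⟨⟨y, hy, hLy⟩, hxv⟩
  simp only [ContinuousLinearMap.coe_coe] at hLy
  have hy2 : y.2 = 0 := by
    have := (Submodule.mem_prod.mp hy).2
    simpa using this
  have hyrep : y = (y.1, 0) := by rw [← hy2]
  have hkey : ∀ i, (L y).2 i = ∑ j, y.1 j * (L ((Pi.single j 1 : Fin n → ℝ), 0)).2 i := by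
    intro i
    have : (L y).2 i
        = (((ContinuousLinearMap.proj i).comp
            ((ContinuousLinearMap.snd ℝ (Fin n → ℝ) (Fin n → ℝ)).comp L)).comp
            (ContinuousLinearMap.inl ℝ (Fin n → ℝ) (Fin n → ℝ)) : _ →L[ℝ] ℝ) y.1 := by
      rw [hyrep]; simp
    rw [this]
    have := LinearMap.pi_apply_eq_sum_univ
      ((((ContinuousLinearMap.proj i).comp
            ((ContinuousLinearMap.snd ℝ (Fin n → ℝ) (Fin n → ℝ)).comp L)).comp
            (ContinuousLinearMap.inl ℝ (Fin n → ℝ) (Fin n → ℝ)) : _ →L[ℝ] ℝ) : _ →ₗ[ℝ] ℝ) y.1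
    simp only [ContinuousLinearMap.coe_coe] at this
    rw [this]
    refine Finset.sum_congr rfl fun j _ => ?_
    rw [smul_eq_mul]
    have harg : (fun j_1 => if j = j_1 then (1:ℝ) else 0) = Pi.single j 1 := by
      funext k; simp [Pi.single_apply, eq_comm]
    rw [harg]
    simp
  have hx2 : x.2 = 0 := by
    have := (Submodule.mem_prod.mp hxv).2
    simpa using this
  have hmv : (Matrix.of fun i j : Fin n =>
      (L ((Pi.single j 1 : Fin n → ℝ), (0 : Fin n → ℝ))).2 i).mulVec y.1 = 0 := by
    funext i
    simp only [Matrix.mulVec, dotProduct, Matrix.of_apply, Pi.zero_apply]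
    have h0 : (L y).2 i = 0 := by rw [hLy, hx2]; rfl
    rw [hkey i] at h0
    rw [← h0]
    exact Finset.sum_congr rfl fun j _ => mul_comm _ _
  have hy1 : y.1 = 0 := by
    have h0 : (Matrix.of fun i j : Fin n =>
        (L ((Pi.single j 1 : Fin n → ℝ), (0 : Fin n → ℝ))).2 i).mulVec 0 = 0 := by
      simp
    exact hinj (by rw [hmv, h0])
  have hyz : y = 0 := by rw [hyrep, hy1]; rfl
  rw [← hLy, hyz]
  simp

/-- Transversality of the moving Lagrangian subspaces
`J_{x₀}(t) = D(φ_{-t})(φ(t,x₀))(ℝ^n × {0})` to the vertical distribution under the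
regularity assumption that `(∂²h/∂pᵢ∂pⱼ(x₀))` is invertible: there is `ε > 0` such that
`J_{x₀}(t) ∩ (ℝ^n × {0}) = {0}` for all `0 < |t| < ε`. -/
theorem moving_lagrangian_transversal_to_vertical
    {n : ℕ} (h : (Fin n → ℝ) × (Fin n → ℝ) → ℝ) (hh : ContDiff ℝ (⊤ : ℕ∞) h)
    (Xh : (Fin n → ℝ) × (Fin n → ℝ) → (Fin n → ℝ) × (Fin n → ℝ))
    (hXh : ContDiff ℝ (⊤ : ℕ∞) Xh)
    (hham : ∀ x w : (Fin n → ℝ) × (Fin n → ℝ), fderiv ℝ h x w = ωstd w (Xh x))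
    (φ : ℝ × ((Fin n → ℝ) × (Fin n → ℝ)) → (Fin n → ℝ) × (Fin n → ℝ))
    (hφ : ContDiff ℝ (⊤ : ℕ∞) φ)
    (hφ0 : ∀ x : (Fin n → ℝ) × (Fin n → ℝ), φ (0, x) = x)
    (hφt : ∀ (t : ℝ) (x : (Fin n → ℝ) × (Fin n → ℝ)),
      HasDerivAt (fun s : ℝ => φ (s, x)) (Xh (φ (t, x))) t)
    (x₀ : (Fin n → ℝ) × (Fin n → ℝ))
    (hreg : IsUnit (Matrix.of fun i j : Fin n =>
      fderiv ℝ (fun y => fderiv ℝ h y ((Pi.single i 1 : Fin n → ℝ), (0 : Fin n → ℝ))) x₀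
        ((Pi.single j 1 : Fin n → ℝ), (0 : Fin n → ℝ)))) :
    ∃ ε : ℝ, 0 < ε ∧ ∀ t : ℝ, 0 < |t| → |t| < ε →
      Submodule.map ((fderiv ℝ (fun y => φ (-t, y)) (φ (t, x₀)) :
          (Fin n → ℝ) × (Fin n → ℝ) →ₗ[ℝ] (Fin n → ℝ) × (Fin n → ℝ)))
          (verticalSubspace n) ⊓ verticalSubspace n = ⊥ := by
  have hφd : Differentiable ℝ φ := hφ.differentiable (by simp)
  have hΦ : ContDiff ℝ (⊤ : ℕ∞) (fderiv ℝ φ) := hφ.fderiv_right (by simp)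
  have hΦd : Differentiable ℝ (fderiv ℝ φ) := hΦ.differentiable (by simp)
  -- the derivative of `φ` at time `0` is `(s, v) ↦ s • Xh z + v`
  have hval : ∀ (z : (Fin n → ℝ) × (Fin n → ℝ)) (s : ℝ) (v : (Fin n → ℝ) × (Fin n → ℝ)),
      fderiv ℝ φ (0, z) (s, v) = s • Xh z + v := by
    intro z s v
    have h2 : fderiv ℝ φ (0, z) (0, v) = v := by
      have hA : fderiv ℝ (fun y => φ (0, y)) z
          = (fderiv ℝ φ (0, z)).comp (ContinuousLinearMap.inr ℝ ℝ _) :=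
        ((hφd (0, z)).hasFDerivAt.comp z (hasFDerivAt_prodMk_right 0 z)).fderiv
      have hid : (fun y : (Fin n → ℝ) × (Fin n → ℝ) => φ (0, y)) = id := funext hφ0
      rw [hid, fderiv_id] at hA
      have := congrArg (fun L => L v) hA.symm
      simpa using this
    have h1 : fderiv ℝ φ (0, z) (1, 0) = Xh z := by
      have hd : HasDerivAt (fun s : ℝ => φ (s, z)) (fderiv ℝ φ (0, z) (1, 0)) 0 := by
        have hc : HasDerivAt (fun s : ℝ => (s, z)) ((1 : ℝ), (0 : (Fin n → ℝ) × (Fin n → ℝ))) 0 :=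
          (hasDerivAt_id 0).prodMk (hasDerivAt_const 0 z)
        simpa [Function.comp_def] using (hφd (0, z)).hasFDerivAt.comp_hasDerivAt 0 hc
      have h0 : HasDerivAt (fun s : ℝ => φ (s, z)) (Xh z) 0 := by
        have := hφt 0 z; rwa [hφ0 z] at this
      exact hd.unique h0
    have hsplit : ((s : ℝ), v) = s • ((1:ℝ), (0:(Fin n → ℝ) × (Fin n → ℝ))) + (0, v) := by
      simp
    rw [hsplit, map_add, map_smul, h1, h2]
  -- the derivative in `t` at `t = 0` of `t ↦ D₂φ(-t, φ(t,x₀))(w)` is `-DXh(x₀)(w)`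
  have hder : ∀ w : (Fin n → ℝ) × (Fin n → ℝ),
      HasDerivAt (fun t => fderiv ℝ φ (-t, φ (t, x₀)) ((0 : ℝ), w))
        (-(fderiv ℝ Xh x₀ w)) 0 := by
    have hF : HasDerivAt (fun t => fderiv ℝ φ (-t, φ (t, x₀)))
        (fderiv ℝ (fderiv ℝ φ) (0, x₀) (-1, Xh x₀)) 0 := by
      have hc : HasDerivAt (fun t : ℝ => (-t, φ (t, x₀)))
          ((-1 : ℝ), Xh x₀) 0 := by
        have h1 : HasDerivAt (fun t : ℝ => -t) (-1 : ℝ) 0 := (hasDerivAt_id 0).neg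
        have h2 : HasDerivAt (fun t : ℝ => φ (t, x₀)) (Xh x₀) 0 := by
          have := hφt 0 x₀; rwa [hφ0 x₀] at this
        exact h1.prodMk h2
      have k := (hΦd ((-0 : ℝ), φ (0, x₀))).hasFDerivAt.comp_hasDerivAt 0 hc
      simpa [hφ0 x₀, Function.comp_def] using k
    have hsym : ∀ a b, fderiv ℝ (fderiv ℝ φ) (0, x₀) a b
        = fderiv ℝ (fderiv ℝ φ) (0, x₀) b a :=
      second_derivative_symmetric (fun y => (hφd y).hasFDerivAt) (hΦd (0, x₀)).hasFDerivAt
    have hcomp : ∀ w, fderiv ℝ (fderiv ℝ φ) (0, x₀) (0, w) (-1, Xh x₀)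
        = -(fderiv ℝ Xh x₀ w) := by
      intro w
      have heval : HasFDerivAt (fun z => fderiv ℝ φ (0, z) ((-1 : ℝ), Xh x₀))
          ((ContinuousLinearMap.apply ℝ _ ((-1 : ℝ), Xh x₀)).comp
            ((fderiv ℝ (fderiv ℝ φ) (0, x₀)).comp (ContinuousLinearMap.inr ℝ ℝ _))) x₀ := by
        have h1 : HasFDerivAt (fun z => fderiv ℝ φ (0, z))
            ((fderiv ℝ (fderiv ℝ φ) (0, x₀)).comp (ContinuousLinearMap.inr ℝ ℝ _)) x₀ :=
          (hΦd (0, x₀)).hasFDerivAt.comp x₀ (hasFDerivAt_prodMk_right 0 x₀)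
        exact ((ContinuousLinearMap.apply ℝ _ ((-1 : ℝ), Xh x₀)).hasFDerivAt).comp x₀ h1
      have heval2 : HasFDerivAt (fun z => fderiv ℝ φ (0, z) ((-1 : ℝ), Xh x₀))
          (-(fderiv ℝ Xh x₀)) x₀ := by
        have hfun : (fun z => fderiv ℝ φ (0, z) ((-1 : ℝ), Xh x₀))
            = fun z => Xh x₀ + (-1 : ℝ) • Xh z := by
          funext z
          rw [hval z (-1) (Xh x₀)]
          module
        rw [hfun]
        have hX : HasFDerivAt Xh (fderiv ℝ Xh x₀) x₀ := (hXh.differentiable (by simp) x₀).hasFDerivAt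
        have := (hX.const_smul (-1 : ℝ)).const_add (Xh x₀)
        rw [← neg_one_smul ℝ (fderiv ℝ Xh x₀)]; exact this
      have := congrArg (fun L => L w) (heval.unique heval2)
      simpa using this
    intro w
    have key : fderiv ℝ (fderiv ℝ φ) (0, x₀) (-1, Xh x₀) (0, w) = -(fderiv ℝ Xh x₀ w) := by
      rw [hsym]; exact hcomp w
    have := (ContinuousLinearMap.apply ℝ _ ((0 : ℝ), w)).hasFDerivAt.comp_hasDerivAt 0 hF
    simpa [key, Function.comp_def] using this
  -- the entries of the moving matrix
  set g : Fin n → Fin n → ℝ → ℝ := fun i j t =>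
    (fderiv ℝ φ (-t, φ (t, x₀)) ((0 : ℝ), ((Pi.single j 1 : Fin n → ℝ), 0))).2 i with hgdef
  have hg0 : ∀ i j, g i j 0 = 0 := by
    intro i j
    have : ((-0 : ℝ), φ (0, x₀)) = ((0 : ℝ), x₀) := by simp [hφ0 x₀]
    simp only [hgdef, this, hval x₀ 0 ((Pi.single j 1 : Fin n → ℝ), 0)]
    simp
  have hgd : ∀ i j, HasDerivAt (g i j)
      (-((fderiv ℝ Xh x₀ ((Pi.single j 1 : Fin n → ℝ), 0)).2 i)) 0 := by
    intro i j
    have hc := ((ContinuousLinearMap.proj i).comp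
        (ContinuousLinearMap.snd ℝ (Fin n → ℝ) (Fin n → ℝ))).hasFDerivAt.comp_hasDerivAt 0
        (hder ((Pi.single j 1 : Fin n → ℝ), 0))
    simpa [hgdef, Function.comp_def] using hc
  -- identify the derivative matrix with the regularity matrix
  have hmatrix : (Matrix.of fun i j : Fin n =>
      -((fderiv ℝ Xh x₀ ((Pi.single j 1 : Fin n → ℝ), 0)).2 i))
      = -(Matrix.of fun i j : Fin n =>
      fderiv ℝ (fun y => fderiv ℝ h y ((Pi.single i 1 : Fin n → ℝ), (0 : Fin n → ℝ))) x₀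
        ((Pi.single j 1 : Fin n → ℝ), (0 : Fin n → ℝ))) := by
    ext i j
    simp only [Matrix.of_apply, Matrix.neg_apply]
    congr 1
    have hfun : (fun y => fderiv ℝ h y ((Pi.single i 1 : Fin n → ℝ), (0 : Fin n → ℝ)))
        = fun y => (Xh y).2 i := by
      funext y
      rw [hham]
      simp [ωstd, Pi.single_apply]
    rw [hfun]
    have hX : HasFDerivAt Xh (fderiv ℝ Xh x₀) x₀ := (hXh.differentiable (by simp) x₀).hasFDerivAt
    have hlin : HasFDerivAt (fun y => (Xh y).2 i)
        (((ContinuousLinearMap.proj i).comp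
          (ContinuousLinearMap.snd ℝ (Fin n → ℝ) (Fin n → ℝ))).comp (fderiv ℝ Xh x₀)) x₀ :=
      (((ContinuousLinearMap.proj i).comp
        (ContinuousLinearMap.snd ℝ (Fin n → ℝ) (Fin n → ℝ))).hasFDerivAt).comp x₀ hX
    rw [hlin.fderiv]
    simp
  have hdunit : IsUnit (Matrix.of fun i j : Fin n =>
      -((fderiv ℝ Xh x₀ ((Pi.single j 1 : Fin n → ℝ), 0)).2 i)) := by
    rw [hmatrix]; exact hreg.neg
  obtain ⟨ε, hε, hinj⟩ := aux_small_time_injective g _ hg0 hgd hdunit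
  refine ⟨ε, hε, fun t ht htε => ?_⟩
  -- identify the derivative of `y ↦ φ(-t, y)` with the composed derivative of `φ`
  have hA : fderiv ℝ (fun y => φ (-t, y)) (φ (t, x₀))
      = (fderiv ℝ φ (-t, φ (t, x₀))).comp (ContinuousLinearMap.inr ℝ ℝ _) :=
    ((hφd (-t, φ (t, x₀))).hasFDerivAt.comp (φ (t, x₀))
      (hasFDerivAt_prodMk_right (-t) (φ (t, x₀)))).fderiv
  apply aux_transversal
  have hMeq : (Matrix.of fun i j : Fin n =>
      ((fderiv ℝ (fun y => φ (-t, y)) (φ (t, x₀)))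
        ((Pi.single j 1 : Fin n → ℝ), (0 : Fin n → ℝ))).2 i)
      = Matrix.of fun i j => g i j t := by
    ext i j
    simp only [Matrix.of_apply, hA, hgdef, ContinuousLinearMap.comp_apply,
      ContinuousLinearMap.inr_apply]
  rw [hMeq]
  exact hinj t ht htε
end
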